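/- arXiv:quant-ph/9711032 — 5 statements merged into one kernel-verified Lean document; each statement's English description precedes it below -/
import Mathlib

section
/- Given a density matrix ρ on a finite-dimensional bipartite complex Hilbert space H_A ⊗ H_B, let λ_max be the largest eigenvalue of ρ. Then there exist a finite-dimensional complex Hilbert space H_C of dimension dim H_A + 1, a unit vector |0_C⟩ ∈ H_C, and a unit vector |Ψ⟩ ∈ H_A ⊗ H_B ⊗ H_C such that Tr_{BC} |Ψ⟩⟨Ψ| = Tr_B ρ (i.e. |Ψ⟩ is a purification of Tr_B ρ over H_B ⊗ H_C) and ⟨Ψ| (ρ ⊗ |0_C⟩⟨0_C|) |Ψ⟩ = λ_max². -/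
open scoped BigOperators ComplexOrder
open Classical

noncomputable section
namespace QI

/-- The outer product `|v⟩⟨v|` of a vector with itself. -/
def outer {A : Type*} [Fintype A] (v : A → ℂ) : Matrix A A ℂ :=
  Matrix.of fun i j => v i * (starRingEnd ℂ) (v j)

/-- The quadratic form `⟨v| M |v⟩`. -/
def qform {A : Type*} [Fintype A] (M : Matrix A A ℂ) (v : A → ℂ) : ℂ :=
  ∑ i, ∑ j, (starRingEnd ℂ) (v i) * M i j * v j

/-- The inner product `⟨v|w⟩` (antilinear in the first argument). -/
def inner' {A : Type*} [Fintype A] (v w : A → ℂ) : ℂ :=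
  ∑ i, (starRingEnd ℂ) (v i) * w i

/-- A density matrix: positive semidefinite with trace one. -/
def IsDensityMatrix {A : Type*} [Fintype A] (ρ : Matrix A A ℂ) : Prop :=
  ρ.PosSemidef ∧ ρ.trace = 1

/-- Partial trace over the first tensor factor (`Tr_A`). -/
def ptraceA {A B : Type*} [Fintype A] [Fintype B]
    (M : Matrix (A × B) (A × B) ℂ) : Matrix B B ℂ :=
  Matrix.of fun i j => ∑ a, M (a, i) (a, j)

/-- Partial trace over the second tensor factor (`Tr_B`). -/
def ptraceB {A B : Type*} [Fintype A] [Fintype B]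
    (M : Matrix (A × B) (A × B) ℂ) : Matrix A A ℂ :=
  Matrix.of fun i j => ∑ b, M (i, b) (j, b)

/-- The von Neumann entropy (base 2) of a matrix, via its eigenvalues;
`0` if the matrix is not Hermitian.  The convention `0 · log₂ 0 = 0` holds
since `Real.logb 2 0 = 0`. -/
def vnEntropy {A : Type*} [Fintype A] [DecidableEq A] (ρ : Matrix A A ℂ) : ℝ :=
  if h : ρ.IsHermitian then -∑ i, h.eigenvalues i * Real.logb 2 (h.eigenvalues i) else 0

lemma entry_UDU {n : Type*} [Fintype n] [DecidableEq n] (U : Matrix n n ℂ) (d : n → ℂ)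
    (i j : n) :
    (U * Matrix.diagonal d * star U) i j
      = ∑ k, U i k * d k * (starRingEnd ℂ) (U j k) := by
  rw [Matrix.mul_apply]
  refine Finset.sum_congr rfl fun k _ => ?_
  rw [Matrix.mul_diagonal, Matrix.star_apply]
  rfl

open Matrix in
lemma ptraceB_posSemidef {A B : Type*} [Fintype A] [Fintype B]
    {M : Matrix (A × B) (A × B) ℂ} (hM : M.PosSemidef) : (ptraceB M).PosSemidef := by
  refine Matrix.PosSemidef.of_dotProduct_mulVec_nonneg ?_ ?_
  · ext i j
    simp only [Matrix.conjTranspose_apply, ptraceB, Matrix.of_apply, star_sum]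
    exact Finset.sum_congr rfl fun b _ => hM.1.apply (i, b) (j, b)
  · intro x
    have key : ∀ b : B,
        star (fun p : A × B => if p.2 = b then x p.1 else 0) ⬝ᵥ
          M *ᵥ (fun p : A × B => if p.2 = b then x p.1 else 0)
        = ∑ i, ∑ j, (starRingEnd ℂ) (x i) * M (i, b) (j, b) * x j := by
      intro b
      simp only [dotProduct, Matrix.mulVec, Pi.star_apply,
        Fintype.sum_prod_type, ite_mul, zero_mul, mul_ite, mul_zero,
        Finset.sum_ite_eq', Finset.mem_univ, if_true]
      refine Finset.sum_congr rfl fun i _ => ?_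
      simp only [apply_ite star, star_zero, ite_mul, zero_mul, Finset.sum_ite_eq',
        Finset.mem_univ, if_true]
      rw [Finset.mul_sum]
      refine Finset.sum_congr rfl fun j _ => ?_
      simp only [Complex.star_def]
      ring
    have h1 : star x ⬝ᵥ ptraceB M *ᵥ x
        = ∑ b, ∑ i, ∑ j, (starRingEnd ℂ) (x i) * M (i, b) (j, b) * x j := by
      simp only [dotProduct, Matrix.mulVec, ptraceB, Matrix.of_apply, Pi.star_apply]
      calc ∑ i, star (x i) * ∑ j, (∑ b, M (i, b) (j, b)) * x j
          = ∑ i, ∑ j, ∑ b, (starRingEnd ℂ) (x i) * M (i, b) (j, b) * x j := by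
            refine Finset.sum_congr rfl fun i _ => ?_
            rw [Finset.mul_sum]
            refine Finset.sum_congr rfl fun j _ => ?_
            rw [Finset.sum_mul, Finset.mul_sum]
            refine Finset.sum_congr rfl fun b _ => ?_
            simp only [Complex.star_def]
            ring
        _ = ∑ i, ∑ b, ∑ j, (starRingEnd ℂ) (x i) * M (i, b) (j, b) * x j :=
            Finset.sum_congr rfl fun i _ => Finset.sum_comm
        _ = ∑ b, ∑ i, ∑ j, (starRingEnd ℂ) (x i) * M (i, b) (j, b) * x j :=
            Finset.sum_comm
    rw [h1]
    refine Finset.sum_nonneg fun b _ => ?_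
    rw [← key b]
    exact hM.dotProduct_mulVec_nonneg _

/-- **Lemma 3.** Given a density matrix `ρ` on `H_A ⊗ H_B` with largest eigenvalue
`λ_max`, there is a purification `|Ψ⟩ ∈ H_A ⊗ H_B ⊗ H_C` of `Tr_B ρ` (with
`dim H_C = dim H_A + 1`) such that `⟨Ψ| (ρ ⊗ |0_C⟩⟨0_C|) |Ψ⟩ = λ_max²`.
Here `H_C = ℂ^(dim H_A + 1)` and the triple tensor product is indexed by `(A × B) × C`;
the first conjunct states `Tr_{BC} |Ψ⟩⟨Ψ| = Tr_B ρ`. -/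
theorem purification_overlap_lemma
    {A B : Type*} [Fintype A] [Fintype B] [DecidableEq A] [DecidableEq B]
    (ρ : Matrix (A × B) (A × B) ℂ) (hρ : IsDensityMatrix ρ)
    (lmax : ℝ) (hev : ∃ i, hρ.1.1.eigenvalues i = lmax)
    (hmax : ∀ i, hρ.1.1.eigenvalues i ≤ lmax) :
    ∃ (c0 : Fin (Fintype.card A + 1) → ℂ)
      (Ψ : (A × B) × Fin (Fintype.card A + 1) → ℂ),
      inner' c0 c0 = 1 ∧ inner' Ψ Ψ = 1 ∧
      (Matrix.of fun i j : A => ∑ b, ∑ c, outer Ψ ((i, b), c) ((j, b), c)) = ptraceB ρ ∧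
      qform (Matrix.of fun p q : (A × B) × Fin (Fintype.card A + 1) =>
          ρ p.1 q.1 * (c0 p.2 * (starRingEnd ℂ) (c0 q.2))) Ψ = ((lmax ^ 2 : ℝ) : ℂ) := by
  classical
  obtain ⟨i0, hi0⟩ := hev
  have hB : Nonempty B := by
    by_contra h
    haveI : IsEmpty B := not_nonempty_iff.mp h
    have h0 : ρ.trace = 0 := by simp [Matrix.trace]
    exact one_ne_zero (hρ.2 ▸ h0 : (1 : ℂ) = 0)
  obtain ⟨b0⟩ := hB
  set n := Fintype.card A with hn
  let e : Fin n ≃ A := (Fintype.equivFin A).symm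
  set U : Matrix (A × B) (A × B) ℂ := (hρ.1.1.eigenvectorUnitary : Matrix (A × B) (A × B) ℂ) with hU
  set v : (A × B) → ℂ := ⇑(hρ.1.1.eigenvectorBasis i0) with hv
  have hl0 : (0 : ℝ) ≤ lmax := hi0 ▸ hρ.1.eigenvalues_nonneg i0
  have hsl2 : ((Real.sqrt lmax : ℝ) : ℂ) * ((Real.sqrt lmax : ℝ) : ℂ) = (lmax : ℂ) := by
    rw [← Complex.ofReal_mul, Real.mul_self_sqrt hl0]
  have hvρ : ∀ p, (∑ q, ρ p q * v q) = (lmax : ℂ) * v p := by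
    intro p
    have h := congrFun (hρ.1.1.mulVec_eigenvectorBasis i0) p
    simpa [Matrix.mulVec, dotProduct, hi0, Complex.real_smul] using h
  have hvnorm : ∑ p, (starRingEnd ℂ) (v p) * v p = 1 := by
    have h := orthonormal_iff_ite.mp hρ.1.1.eigenvectorBasis.orthonormal i0 i0
    rw [if_pos rfl, PiLp.inner_apply] at h
    rw [← h, hv]
    refine Finset.sum_congr rfl fun p _ => ?_
    simp only [RCLike.inner_apply]
    ring
  have hUv : ∀ p, U p i0 = v p := fun p => hρ.1.1.eigenvectorUnitary_apply p i0
  have hρentry : ∀ p q, ρ p q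
      = ∑ k, U p k * ((hρ.1.1.eigenvalues k : ℝ) : ℂ) * (starRingEnd ℂ) (U q k) := by
    intro p q
    conv_lhs => rw [hρ.1.1.spectral_theorem]
    rw [Unitary.conjStarAlgAut_apply, entry_UDU]
    rfl
  -- positive semidefiniteness of ρ - lmax • outer v
  set f : (A × B) → ℂ := fun k => (((if k = i0 then (0:ℝ) else hρ.1.1.eigenvalues k) : ℝ) : ℂ) with hf
  have hsub : (ρ - (lmax : ℂ) • outer v).PosSemidef := by
    have hdiag : (Matrix.diagonal f).PosSemidef := by
      rw [Matrix.posSemidef_diagonal_iff]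
      intro k
      by_cases hk : k = i0 <;> simp [hf, hk]
      exact_mod_cast hρ.1.eigenvalues_nonneg k
    have hmm := hdiag.mul_mul_conjTranspose_same U
    have heq : ρ - (lmax : ℂ) • outer v = U * Matrix.diagonal f * star U := by
      ext p q
      rw [entry_UDU]
      have hterm : ∀ k, U p k * f k * (starRingEnd ℂ) (U q k)
          = U p k * ((hρ.1.1.eigenvalues k : ℝ) : ℂ) * (starRingEnd ℂ) (U q k)
            - (if k = i0 then (lmax : ℂ) * (U p i0 * (starRingEnd ℂ) (U q i0)) else 0) := by
        intro k
        by_cases hk : k = i0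
        · subst hk
          simp only [hf, if_pos rfl, hi0]
          push_cast
          ring
        · simp [hf, hk]
      rw [Finset.sum_congr rfl fun k _ => hterm k, Finset.sum_sub_distrib,
        Finset.sum_ite_eq' Finset.univ i0]
      simp only [Finset.mem_univ, if_true, Matrix.sub_apply, Matrix.smul_apply, smul_eq_mul,
        outer, Matrix.of_apply, hUv, ← hρentry]
    rw [heq, Matrix.star_eq_conjTranspose]
    exact hmm
  set τ : Matrix A A ℂ := ptraceB (ρ - (lmax : ℂ) • outer v) with hτdef
  have hτpsd : τ.PosSemidef := ptraceB_posSemidef hsub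
  set W : Matrix A A ℂ := (hτpsd.1.eigenvectorUnitary : Matrix A A ℂ) with hW
  set μ : A → ℝ := hτpsd.1.eigenvalues with hμ
  have hμ0 : ∀ a, 0 ≤ μ a := fun a => hτpsd.eigenvalues_nonneg a
  have hτentry : ∀ i j, τ i j = ∑ a, W i a * ((μ a : ℝ) : ℂ) * (starRingEnd ℂ) (W j a) := by
    intro i j
    conv_lhs => rw [hτpsd.1.spectral_theorem]
    rw [Unitary.conjStarAlgAut_apply, entry_UDU]
    rfl
  -- the vectors
  set c0 : Fin (n + 1) → ℂ := fun c => if c = 0 then 1 else 0 with hc0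
  set Ψ : (A × B) × Fin (n + 1) → ℂ := fun pc =>
    Fin.cases (((Real.sqrt lmax : ℝ) : ℂ) * v pc.1)
      (fun k => ((Real.sqrt (μ (e k)) : ℝ) : ℂ) * W pc.1.1 (e k)
        * (if pc.1.2 = b0 then 1 else 0)) pc.2 with hΨdef
  have hΨ0 : ∀ p, Ψ (p, 0) = ((Real.sqrt lmax : ℝ) : ℂ) * v p := fun p => rfl
  have hΨs : ∀ (p : A × B) (k : Fin n), Ψ (p, k.succ)
      = ((Real.sqrt (μ (e k)) : ℝ) : ℂ) * W p.1 (e k) * (if p.2 = b0 then 1 else 0) := by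
    intro p k
    simp [hΨdef]
  have hmain : (Matrix.of fun i j : A =>
      ∑ b, ∑ c, outer Ψ ((i, b), c) ((j, b), c)) = ptraceB ρ := by
    ext i j
    have hstep : ∀ b, ∑ c, Ψ ((i, b), c) * (starRingEnd ℂ) (Ψ ((j, b), c))
        = (lmax : ℂ) * (v (i, b) * (starRingEnd ℂ) (v (j, b)))
          + ∑ k : Fin n,
            (if b = b0 then W i (e k) * ((μ (e k) : ℝ) : ℂ) * (starRingEnd ℂ) (W j (e k))
             else 0) := by
      intro b
      rw [Fin.sum_univ_succ]
      congr 1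
      · rw [hΨ0, hΨ0, map_mul, Complex.conj_ofReal, ← hsl2]
        ring
      · refine Finset.sum_congr rfl fun k _ => ?_
        rw [hΨs, hΨs]
        by_cases hb : b = b0
        · subst hb
          have hμ2 : ((Real.sqrt (μ (e k)) : ℝ) : ℂ) * ((Real.sqrt (μ (e k)) : ℝ) : ℂ)
              = ((μ (e k) : ℝ) : ℂ) := by
            rw [← Complex.ofReal_mul, Real.mul_self_sqrt (hμ0 _)]
          simp only [eq_self_iff_true, if_true, mul_one, map_mul, Complex.conj_ofReal]
          rw [← hμ2]
          ring
        · simp [hb]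
    calc (Matrix.of fun i j : A => ∑ b, ∑ c, outer Ψ ((i, b), c) ((j, b), c)) i j
        = ∑ b, ∑ c, Ψ ((i, b), c) * (starRingEnd ℂ) (Ψ ((j, b), c)) := rfl
      _ = ∑ b, ((lmax : ℂ) * (v (i, b) * (starRingEnd ℂ) (v (j, b)))
            + ∑ k : Fin n,
              (if b = b0 then W i (e k) * ((μ (e k) : ℝ) : ℂ) * (starRingEnd ℂ) (W j (e k))
               else 0)) := Finset.sum_congr rfl fun b _ => hstep b
      _ = (lmax : ℂ) * (∑ b, v (i, b) * (starRingEnd ℂ) (v (j, b))) + τ i j := by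
          rw [Finset.sum_add_distrib, ← Finset.mul_sum]
          congr 1
          rw [Finset.sum_comm]
          simp only [Finset.sum_ite_eq', Finset.mem_univ, if_true]
          rw [hτentry i j,
            ← Equiv.sum_comp e (fun a => W i a * ((μ a : ℝ) : ℂ) * (starRingEnd ℂ) (W j a))]
      _ = ptraceB ρ i j := by
          have ht : τ i j
              = ptraceB ρ i j - (lmax : ℂ) * ∑ b, v (i, b) * (starRingEnd ℂ) (v (j, b)) := by
            simp only [hτdef, ptraceB, Matrix.of_apply, Matrix.sub_apply, Matrix.smul_apply,
              smul_eq_mul, outer, Finset.sum_sub_distrib, Finset.mul_sum]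
          rw [ht]
          ring
  refine ⟨c0, Ψ, ?_, ?_, hmain, ?_⟩
  · simp [inner', hc0, apply_ite (starRingEnd ℂ), ite_mul, mul_ite, Finset.sum_ite_eq']
  · have h2 : inner' Ψ Ψ = ∑ a, (Matrix.of fun i j : A =>
        ∑ b, ∑ c, outer Ψ ((i, b), c) ((j, b), c)) a a := by
      simp only [inner', Matrix.of_apply, outer, Fintype.sum_prod_type]
      exact Finset.sum_congr rfl fun a _ => Finset.sum_congr rfl fun b _ =>
        Finset.sum_congr rfl fun c _ => mul_comm _ _
    rw [h2, hmain, ← hρ.2]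
    simp [ptraceB, Matrix.trace, Matrix.diag, Fintype.sum_prod_type]
  · have hq1 : qform (Matrix.of fun p q : (A × B) × Fin (n + 1) =>
        ρ p.1 q.1 * (c0 p.2 * (starRingEnd ℂ) (c0 q.2))) Ψ
        = ∑ p1, ∑ q1, (starRingEnd ℂ) (Ψ (p1, (0 : Fin (n + 1)))) * ρ p1 q1 * Ψ (q1, 0) := by
      simp only [qform, Matrix.of_apply, Fintype.sum_prod_type, hc0,
        apply_ite (starRingEnd ℂ), map_one, map_zero, mul_ite, ite_mul, mul_zero, zero_mul,
        mul_one, one_mul, Finset.sum_ite_eq', Finset.mem_univ, if_true]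
      refine Finset.sum_congr rfl fun p1 _ => ?_
      rw [Finset.sum_comm]
      simp only [Finset.sum_ite_irrel, Finset.sum_const_zero, Finset.sum_ite_eq',
        Finset.mem_univ, if_true]
    rw [hq1]
    calc ∑ p1, ∑ q1, (starRingEnd ℂ) (Ψ (p1, (0 : Fin (n + 1)))) * ρ p1 q1 * Ψ (q1, 0)
        = ∑ p1, ((Real.sqrt lmax : ℝ) : ℂ) * ((Real.sqrt lmax : ℝ) : ℂ)
            * (starRingEnd ℂ) (v p1) * (∑ q1, ρ p1 q1 * v q1) := by
          refine Finset.sum_congr rfl fun p1 _ => ?_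
          rw [Finset.mul_sum]
          refine Finset.sum_congr rfl fun q1 _ => ?_
          rw [hΨ0, hΨ0, map_mul, Complex.conj_ofReal]
          ring
      _ = (lmax : ℂ) * (lmax : ℂ) * ∑ p1, (starRingEnd ℂ) (v p1) * v p1 := by
          rw [Finset.mul_sum]
          refine Finset.sum_congr rfl fun p1 _ => ?_
          rw [hvρ p1, hsl2]
          ring
      _ = ((lmax ^ 2 : ℝ) : ℂ) := by
          rw [hvnorm]
          push_cast
          ring

end QI
end
end

section
/- Let ρ₁ and ρ₂ be density matrices on a finite-dimensional complex Hilbert space, and let λ⁽¹⁾ and λ⁽²⁾ denote their respective eigenvalue sequences arranged in decreasing order. Then the Bhattacharyya–Wootters overlap B(λ⁽¹⁾, λ⁽²⁾) = (∑ᵢ √(λᵢ⁽¹⁾ λᵢ⁽²⁾))² satisfies B(λ⁽¹⁾, λ⁽²⁾) ≥ F(ρ₁, ρ₂). -/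
open scoped BigOperators ComplexOrder
open Classical

noncomputable section
namespace QI

/-- The fidelity of two density matrices on `A`: the supremum of squared overlaps
`|⟨ζ₁|ζ₂⟩|²` over all purifications `ζ₁` of `ρ₁` and `ζ₂` of `ρ₂` into the common space
`H_R ⊗ H` with `H_R = H` (a reference space of dimension `dim H` suffices to realize
every value, and Uhlmann's theorem shows the maximum is attained there). -/
def fidelity {A : Type*} [Fintype A] (ρ₁ ρ₂ : Matrix A A ℂ) : ℝ :=
  sSup {x : ℝ | ∃ ζ₁ ζ₂ : A × A → ℂ,
    ptraceA (outer ζ₁) = ρ₁ ∧ ptraceA (outer ζ₂) = ρ₂ ∧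
    x = Complex.normSq (inner' ζ₁ ζ₂)}

/-- Indicator counting. -/
lemma chi_count {n k : ℕ} (hk : k < n) :
    ∑ i ∈ Finset.range n, (if i ≤ k then (1:ℝ) else 0) = (k : ℝ) + 1 := by
  rw [Finset.sum_ite, Finset.sum_const_zero, add_zero, Finset.sum_const]
  have : (Finset.range n).filter (fun i => i ≤ k) = Finset.range (k+1) := by
    ext i; simp only [Finset.mem_filter, Finset.mem_range]; omega
  rw [this, Finset.card_range]
  push_cast
  ring

/-- Nat-level rearrangement bound for doubly substochastic matrices. -/
lemma substochastic_sum_le_nat (n : ℕ) (a b : ℕ → ℝ) (D : ℕ → ℕ → ℝ)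
    (ha0 : ∀ k, 0 ≤ a k) (hb0 : ∀ k, 0 ≤ b k)
    (hmona : ∀ k, k + 1 < n → a (k+1) ≤ a k) (hmonb : ∀ k, k + 1 < n → b (k+1) ≤ b k)
    (han : ∀ k, n ≤ k → a k = 0) (hbn : ∀ k, n ≤ k → b k = 0)
    (hD0 : ∀ i j, 0 ≤ D i j)
    (hrow : ∀ i, ∑ j ∈ Finset.range n, D i j ≤ 1)
    (hcol : ∀ j, ∑ i ∈ Finset.range n, D i j ≤ 1) :
    ∑ i ∈ Finset.range n, ∑ j ∈ Finset.range n, a i * b j * D i j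
      ≤ ∑ i ∈ Finset.range n, a i * b i := by
  classical
  set c : ℕ → ℝ := fun k => a k - a (k+1) with hcdef
  set d : ℕ → ℝ := fun l => b l - b (l+1) with hddef
  have hc0 : ∀ k ∈ Finset.range n, 0 ≤ c k := by
    intro k hk
    rw [Finset.mem_range] at hk
    by_cases h : k + 1 < n
    · exact sub_nonneg.2 (hmona k h)
    · have : a (k+1) = 0 := han _ (by omega)
      simp [hcdef, this, ha0 k]
  have hd0 : ∀ l ∈ Finset.range n, 0 ≤ d l := by
    intro l hl
    rw [Finset.mem_range] at hl
    by_cases h : l + 1 < n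
    · exact sub_nonneg.2 (hmonb l h)
    · have : b (l+1) = 0 := hbn _ (by omega)
      simp [hddef, this, hb0 l]
  have hrep : ∀ f : ℕ → ℝ, (∀ k, n ≤ k → f k = 0) → ∀ i, i < n →
      f i = ∑ k ∈ Finset.range n, if i ≤ k then f k - f (k+1) else 0 := by
    intro f hfn i hi
    rw [Finset.sum_ite, Finset.sum_const_zero, add_zero]
    have hfil : (Finset.range n).filter (fun k => i ≤ k) = Finset.Ico i n := by
      ext k; simp only [Finset.mem_filter, Finset.mem_range, Finset.mem_Ico]; omega
    rw [hfil, Finset.sum_Ico_eq_sum_range]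
    have ht := Finset.sum_range_sub' (fun k => f (i + k)) (n - i)
    rw [show i + (n-i) = n by omega, hfn n le_rfl, sub_zero, add_zero] at ht
    exact ht.symm
  have hrepa : ∀ i, i < n → a i = ∑ k ∈ Finset.range n, if i ≤ k then c k else 0 :=
    fun i hi => hrep a han i hi
  have hrepb : ∀ j, j < n → b j = ∑ l ∈ Finset.range n, if j ≤ l then d l else 0 :=
    fun j hj => hrep b hbn j hj
  set S : ℕ → ℕ → ℝ := fun k l => ∑ i ∈ Finset.range n, ∑ j ∈ Finset.range n,
      (if i ≤ k then (1:ℝ) else 0) * (if j ≤ l then (1:ℝ) else 0) * D i j with hSdef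
  set N : ℕ → ℕ → ℝ := fun k l => ∑ i ∈ Finset.range n,
      (if i ≤ k then (1:ℝ) else 0) * (if i ≤ l then (1:ℝ) else 0) with hNdef
  -- LHS rewriting
  have hL : ∑ i ∈ Finset.range n, ∑ j ∈ Finset.range n, a i * b j * D i j
      = ∑ k ∈ Finset.range n, ∑ l ∈ Finset.range n, c k * d l * S k l := by
    have step1 : ∑ i ∈ Finset.range n, ∑ j ∈ Finset.range n, a i * b j * D i j
        = ∑ i ∈ Finset.range n, ∑ j ∈ Finset.range n, ∑ k ∈ Finset.range n, ∑ l ∈ Finset.range n,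
            c k * d l * ((if i ≤ k then (1:ℝ) else 0) * (if j ≤ l then (1:ℝ) else 0) * D i j) := by
      refine Finset.sum_congr rfl fun i hi => Finset.sum_congr rfl fun j hj => ?_
      rw [hrepa i (Finset.mem_range.1 hi), hrepb j (Finset.mem_range.1 hj),
        Finset.sum_mul_sum, Finset.sum_mul]
      refine Finset.sum_congr rfl fun k _ => ?_
      rw [Finset.sum_mul]
      refine Finset.sum_congr rfl fun l _ => ?_
      split_ifs <;> ring
    rw [step1]
    rw [show (∑ i ∈ Finset.range n, ∑ j ∈ Finset.range n, ∑ k ∈ Finset.range n, ∑ l ∈ Finset.range n,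
            c k * d l * ((if i ≤ k then (1:ℝ) else 0) * (if j ≤ l then (1:ℝ) else 0) * D i j))
        = ∑ k ∈ Finset.range n, ∑ i ∈ Finset.range n, ∑ j ∈ Finset.range n, ∑ l ∈ Finset.range n,
            c k * d l * ((if i ≤ k then (1:ℝ) else 0) * (if j ≤ l then (1:ℝ) else 0) * D i j) from ?_,
      show (∑ k ∈ Finset.range n, ∑ i ∈ Finset.range n, ∑ j ∈ Finset.range n, ∑ l ∈ Finset.range n,
            c k * d l * ((if i ≤ k then (1:ℝ) else 0) * (if j ≤ l then (1:ℝ) else 0) * D i j))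
        = ∑ k ∈ Finset.range n, ∑ l ∈ Finset.range n, ∑ i ∈ Finset.range n, ∑ j ∈ Finset.range n,
            c k * d l * ((if i ≤ k then (1:ℝ) else 0) * (if j ≤ l then (1:ℝ) else 0) * D i j) from ?_]
    · refine Finset.sum_congr rfl fun k _ => Finset.sum_congr rfl fun l _ => ?_
      simp only [hSdef, Finset.mul_sum]
    · refine Finset.sum_congr rfl fun k _ => ?_
      rw [show (∑ i ∈ Finset.range n, ∑ j ∈ Finset.range n, ∑ l ∈ Finset.range n,
            c k * d l * ((if i ≤ k then (1:ℝ) else 0) * (if j ≤ l then (1:ℝ) else 0) * D i j))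
          = ∑ i ∈ Finset.range n, ∑ l ∈ Finset.range n, ∑ j ∈ Finset.range n,
            c k * d l * ((if i ≤ k then (1:ℝ) else 0) * (if j ≤ l then (1:ℝ) else 0) * D i j) from
        Finset.sum_congr rfl fun i _ => Finset.sum_comm]
      exact Finset.sum_comm
    · rw [show (∑ i ∈ Finset.range n, ∑ j ∈ Finset.range n, ∑ k ∈ Finset.range n, ∑ l ∈ Finset.range n,
            c k * d l * ((if i ≤ k then (1:ℝ) else 0) * (if j ≤ l then (1:ℝ) else 0) * D i j))
          = ∑ i ∈ Finset.range n, ∑ k ∈ Finset.range n, ∑ j ∈ Finset.range n, ∑ l ∈ Finset.range n,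
            c k * d l * ((if i ≤ k then (1:ℝ) else 0) * (if j ≤ l then (1:ℝ) else 0) * D i j) from
        Finset.sum_congr rfl fun i _ => Finset.sum_comm]
      exact Finset.sum_comm
  -- RHS rewriting
  have hR : ∑ i ∈ Finset.range n, a i * b i
      = ∑ k ∈ Finset.range n, ∑ l ∈ Finset.range n, c k * d l * N k l := by
    have step1 : ∑ i ∈ Finset.range n, a i * b i
        = ∑ i ∈ Finset.range n, ∑ k ∈ Finset.range n, ∑ l ∈ Finset.range n,
            c k * d l * ((if i ≤ k then (1:ℝ) else 0) * (if i ≤ l then (1:ℝ) else 0)) := by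
      refine Finset.sum_congr rfl fun i hi => ?_
      rw [hrepa i (Finset.mem_range.1 hi), hrepb i (Finset.mem_range.1 hi), Finset.sum_mul_sum]
      refine Finset.sum_congr rfl fun k _ => Finset.sum_congr rfl fun l _ => ?_
      split_ifs <;> ring
    rw [step1, Finset.sum_comm]
    refine Finset.sum_congr rfl fun k _ => ?_
    rw [Finset.sum_comm]
    refine Finset.sum_congr rfl fun l _ => ?_
    simp only [hNdef, Finset.mul_sum]
  rw [hL, hR]
  refine Finset.sum_le_sum fun k hk => Finset.sum_le_sum fun l hl => ?_
  have hkn := Finset.mem_range.1 hk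
  have hln := Finset.mem_range.1 hl
  refine mul_le_mul_of_nonneg_left ?_ (mul_nonneg (hc0 k hk) (hd0 l hl))
  -- S k l ≤ N k l
  have hNval : N k l = ((min k l : ℕ) : ℝ) + 1 := by
    have h1 : N k l = ∑ i ∈ Finset.range n, (if i ≤ min k l then (1:ℝ) else 0) := by
      refine Finset.sum_congr rfl fun i _ => ?_
      by_cases h1 : i ≤ k <;> by_cases h2 : i ≤ l <;>
        simp [h1, h2, le_min_iff]
    rw [h1, chi_count (by omega : min k l < n)]
  have factored : S k l = ∑ i ∈ Finset.range n,
      (if i ≤ k then (1:ℝ) else 0) * ∑ j ∈ Finset.range n, (if j ≤ l then (1:ℝ) else 0) * D i j := by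
    simp only [hSdef]
    refine Finset.sum_congr rfl fun i _ => ?_
    rw [Finset.mul_sum]
    exact Finset.sum_congr rfl fun j _ => by ring
  have hS1 : S k l ≤ (k : ℝ) + 1 := by
    rw [← chi_count hkn, factored]
    refine Finset.sum_le_sum fun i _ => ?_
    by_cases h1 : i ≤ k
    · simp only [h1, if_true, one_mul]
      calc ∑ j ∈ Finset.range n, (if j ≤ l then (1:ℝ) else 0) * D i j
          ≤ ∑ j ∈ Finset.range n, D i j := by
            refine Finset.sum_le_sum fun j _ => ?_
            by_cases h2 : j ≤ l <;> simp [h2, hD0 i j]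
        _ ≤ 1 := hrow i
    · simp [h1]
  have hS2 : S k l ≤ (l : ℝ) + 1 := by
    have factored2 : S k l = ∑ j ∈ Finset.range n,
        (if j ≤ l then (1:ℝ) else 0) * ∑ i ∈ Finset.range n, (if i ≤ k then (1:ℝ) else 0) * D i j := by
      simp only [hSdef]
      rw [Finset.sum_comm]
      refine Finset.sum_congr rfl fun j _ => ?_
      rw [Finset.mul_sum]
      exact Finset.sum_congr rfl fun i _ => by ring
    rw [← chi_count hln, factored2]
    refine Finset.sum_le_sum fun j _ => ?_
    by_cases h2 : j ≤ l
    · simp only [h2, if_true, one_mul]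
      calc ∑ i ∈ Finset.range n, (if i ≤ k then (1:ℝ) else 0) * D i j
          ≤ ∑ i ∈ Finset.range n, D i j := by
            refine Finset.sum_le_sum fun i _ => ?_
            by_cases h1 : i ≤ k <;> simp [h1, hD0 i j]
        _ ≤ 1 := hcol j
    · simp [h2]
  rw [hNval]
  rcases le_total k l with h | h
  · rw [min_eq_left h]; exact hS1
  · rw [min_eq_right h]; exact hS2



/-- Fin-level wrapper. -/
lemma substochastic_sum_le {n : ℕ} (a b : Fin n → ℝ) (ha : Antitone a) (hb : Antitone b)
    (ha0 : ∀ i, 0 ≤ a i) (hb0 : ∀ i, 0 ≤ b i)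
    (D : Fin n → Fin n → ℝ) (hD0 : ∀ i j, 0 ≤ D i j)
    (hrow : ∀ i, ∑ j, D i j ≤ 1) (hcol : ∀ j, ∑ i, D i j ≤ 1) :
    ∑ i, ∑ j, a i * b j * D i j ≤ ∑ i, a i * b i := by
  classical
  set a' : ℕ → ℝ := fun k => if h : k < n then a ⟨k, h⟩ else 0 with ha'def
  set b' : ℕ → ℝ := fun k => if h : k < n then b ⟨k, h⟩ else 0 with hb'def
  set D' : ℕ → ℕ → ℝ := fun i j => if h : i < n ∧ j < n then D ⟨i, h.1⟩ ⟨j, h.2⟩ else 0 with hD'def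
  have hD0' : ∀ i j, 0 ≤ D' i j := by
    intro i j; simp only [hD'def]
    split_ifs with h
    · exact hD0 _ _
    · exact le_refl 0
  have ha0' : ∀ k, 0 ≤ a' k := by
    intro k; simp only [ha'def]; split_ifs with h
    · exact ha0 _
    · exact le_refl 0
  have hb0' : ∀ k, 0 ≤ b' k := by
    intro k; simp only [hb'def]; split_ifs with h
    · exact hb0 _
    · exact le_refl 0
  have hmona' : ∀ k, k + 1 < n → a' (k+1) ≤ a' k := by
    intro k hk
    simp only [ha'def, dif_pos hk, dif_pos (by omega : k < n)]
    exact ha (by simp [Fin.mk_le_mk])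
  have hmonb' : ∀ k, k + 1 < n → b' (k+1) ≤ b' k := by
    intro k hk
    simp only [hb'def, dif_pos hk, dif_pos (by omega : k < n)]
    exact hb (by simp [Fin.mk_le_mk])
  have han' : ∀ k, n ≤ k → a' k = 0 := by
    intro k hk; simp only [ha'def]; rw [dif_neg (by omega)]
  have hbn' : ∀ k, n ≤ k → b' k = 0 := by
    intro k hk; simp only [hb'def]; rw [dif_neg (by omega)]
  have hrow' : ∀ i, ∑ j ∈ Finset.range n, D' i j ≤ 1 := by
    intro i
    by_cases hi : i < n
    · have : ∑ j ∈ Finset.range n, D' i j = ∑ j : Fin n, D ⟨i, hi⟩ j := by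
        rw [← Fin.sum_univ_eq_sum_range (fun j => D' i j) n]
        refine Finset.sum_congr rfl fun j _ => ?_
        simp [hD'def, hi, j.isLt]
      rw [this]; exact hrow _
    · have : ∑ j ∈ Finset.range n, D' i j = 0 := by
        refine Finset.sum_eq_zero fun j _ => ?_
        simp only [hD'def]; rw [dif_neg (by omega)]
      rw [this]; norm_num
  have hcol' : ∀ j, ∑ i ∈ Finset.range n, D' i j ≤ 1 := by
    intro j
    by_cases hj : j < n
    · have : ∑ i ∈ Finset.range n, D' i j = ∑ i : Fin n, D i ⟨j, hj⟩ := by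
        rw [← Fin.sum_univ_eq_sum_range (fun i => D' i j) n]
        refine Finset.sum_congr rfl fun i _ => ?_
        simp [hD'def, hj, i.isLt]
      rw [this]; exact hcol _
    · have : ∑ i ∈ Finset.range n, D' i j = 0 := by
        refine Finset.sum_eq_zero fun i _ => ?_
        simp only [hD'def]; rw [dif_neg (by omega)]
      rw [this]; norm_num
  have key := substochastic_sum_le_nat n a' b' D' ha0' hb0' hmona' hmonb' han' hbn' hD0' hrow' hcol'
  have eL : ∑ i ∈ Finset.range n, ∑ j ∈ Finset.range n, a' i * b' j * D' i j
      = ∑ i : Fin n, ∑ j : Fin n, a i * b j * D i j := by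
    rw [← Fin.sum_univ_eq_sum_range (fun i => ∑ j ∈ Finset.range n, a' i * b' j * D' i j) n]
    refine Finset.sum_congr rfl fun i _ => ?_
    rw [← Fin.sum_univ_eq_sum_range (fun j => a' ↑i * b' j * D' ↑i j) n]
    refine Finset.sum_congr rfl fun j _ => ?_
    simp [ha'def, hb'def, hD'def, i.isLt, j.isLt]
  have eR : ∑ i ∈ Finset.range n, a' i * b' i = ∑ i : Fin n, a i * b i := by
    rw [← Fin.sum_univ_eq_sum_range (fun i => a' i * b' i) n]
    refine Finset.sum_congr rfl fun i _ => ?_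
    simp [ha'def, hb'def, i.isLt]
  rw [eL, eR] at key
  exact key

local notation "⟪" x ", " y "⟫" => @inner ℂ _ _ x y

/-- Bessel-type bound: if `t` is an orthogonal family with `⟪t i, t i'⟫ = δ λᵢ`,
then `∑ i, |⟪t i, x⟫|² / λᵢ ≤ ‖x‖²` (with `/0 = 0` junk values). -/
lemma bessel_aux {A : Type*} [Fintype A] [DecidableEq A] (lam : A → ℝ)
    (t : A → EuclideanSpace ℂ A)
    (ht : ∀ i i', ⟪t i, t i'⟫ = if i = i' then (lam i : ℂ) else 0)
    (x : EuclideanSpace ℂ A) :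
    ∑ i, Complex.normSq ⟪t i, x⟫ / lam i ≤ ‖x‖ ^ 2 := by
  classical
  have hlam : ∀ i, 0 ≤ lam i := by
    intro i
    have h2 : (0:ℝ) ≤ RCLike.re ⟪t i, t i⟫ := inner_self_nonneg
    rw [ht i i, if_pos rfl] at h2
    simpa using h2
  set v : {i : A // lam i ≠ 0} → EuclideanSpace ℂ A :=
    fun i => (((Real.sqrt (lam i.1))⁻¹ : ℝ) : ℂ) • t i.1 with hvdef
  have hv : Orthonormal ℂ v := by
    rw [orthonormal_iff_ite]
    intro i j
    simp only [hvdef, inner_smul_left, inner_smul_right, ht]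
    rw [Complex.conj_ofReal]
    by_cases h : i = j
    · subst h
      simp only [if_pos rfl]
      have h0 : lam i.1 ≠ 0 := i.2
      have hs : Real.sqrt (lam i.1) * Real.sqrt (lam i.1) = lam i.1 :=
        Real.mul_self_sqrt (hlam i.1)
      have hsne : Real.sqrt (lam i.1) ≠ 0 := by
        intro hc
        rw [hc, mul_zero] at hs
        exact h0 hs.symm
      push_cast
      field_simp
      exact_mod_cast (Real.sq_sqrt (hlam i.1)).symm
    · have h1 : i.1 ≠ j.1 := fun hc => h (Subtype.ext hc)
      simp [h, h1]
  have key := hv.sum_inner_products_le (s := Finset.univ) x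
  have hterm : ∀ i : {i : A // lam i ≠ 0},
      ‖⟪v i, x⟫‖ ^ 2 = Complex.normSq ⟪t i.1, x⟫ / lam i.1 := by
    intro i
    simp only [hvdef, inner_smul_left, Complex.conj_ofReal]
    rw [norm_mul, mul_pow]
    have h1 : ‖(((Real.sqrt (lam i.1))⁻¹ : ℝ) : ℂ)‖ ^ 2 = (lam i.1)⁻¹ := by
      rw [Complex.norm_real, Real.norm_eq_abs, sq_abs, ← Real.sqrt_inv,
        Real.sq_sqrt (inv_nonneg.2 (hlam i.1))]
    rw [h1, div_eq_inv_mul]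
    congr 1
    rw [← Complex.sq_norm]
  rw [Finset.sum_congr rfl (fun i _ => hterm i)] at key
  have hsplit : ∑ i, Complex.normSq ⟪t i, x⟫ / lam i
      = ∑ i : {i : A // lam i ≠ 0}, Complex.normSq ⟪t i.1, x⟫ / lam i.1 := by
    rw [← Finset.sum_subtype (p := fun i => lam i ≠ 0)
      (Finset.univ.filter (fun i => lam i ≠ 0)) (by simp) (fun i => Complex.normSq ⟪t i, x⟫ / lam i)]
    rw [Finset.sum_filter_of_ne]
    intro i _ hne
    intro hzero
    rw [hzero, div_zero] at hne
    exact hne rfl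
  rw [hsplit]
  exact key


/-- The key purification overlap bound. -/
lemma norm_inner'_le {A : Type*} [Fintype A] [DecidableEq A]
    {ρ₁ ρ₂ : Matrix A A ℂ} (h₁ : IsDensityMatrix ρ₁) (h₂ : IsDensityMatrix ρ₂)
    (l1 l2 : Fin (Fintype.card A) → ℝ)
    (σ₁ : Fin (Fintype.card A) ≃ A) (hσ1 : ∀ i, l1 i = h₁.1.1.eigenvalues (σ₁ i))
    (σ₂ : Fin (Fintype.card A) ≃ A) (hσ2 : ∀ i, l2 i = h₂.1.1.eigenvalues (σ₂ i))
    (hm1 : Antitone l1) (hm2 : Antitone l2)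
    (ζ₁ ζ₂ : A × A → ℂ) (p1 : ptraceA (outer ζ₁) = ρ₁) (p2 : ptraceA (outer ζ₂) = ρ₂) :
    ‖inner' ζ₁ ζ₂‖ ≤ ∑ i, Real.sqrt (l1 i * l2 i) := by
  classical
  set lam : A → ℝ := h₁.1.1.eigenvalues with hlamdef
  set mu : A → ℝ := h₂.1.1.eigenvalues with hmudef
  have hlam0 : ∀ i, 0 ≤ lam i := fun i => h₁.1.eigenvalues_nonneg i
  have hmu0 : ∀ i, 0 ≤ mu i := fun i => h₂.1.eigenvalues_nonneg i
  set U₁ : Matrix A A ℂ := (Matrix.IsHermitian.eigenvectorUnitary h₁.1.1 : Matrix A A ℂ) with hU₁def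
  set U₂ : Matrix A A ℂ := (Matrix.IsHermitian.eigenvectorUnitary h₂.1.1 : Matrix A A ℂ) with hU₂def
  have hU₁ : U₁ * star U₁ = 1 :=
    Matrix.mem_unitaryGroup_iff.mp (Matrix.IsHermitian.eigenvectorUnitary h₁.1.1).2
  have hU₂ : U₂ * star U₂ = 1 :=
    Matrix.mem_unitaryGroup_iff.mp (Matrix.IsHermitian.eigenvectorUnitary h₂.1.1).2
  set M₁ : Matrix A A ℂ := Matrix.of (fun i a => ζ₁ (a, i)) with hM₁def
  set M₂ : Matrix A A ℂ := Matrix.of (fun i a => ζ₂ (a, i)) with hM₂def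
  have hρ₁ : M₁ * M₁.conjTranspose = ρ₁ := by
    rw [← p1]; ext i j
    simp [hM₁def, Matrix.mul_apply, Matrix.conjTranspose_apply, ptraceA, outer]
  have hρ₂ : M₂ * M₂.conjTranspose = ρ₂ := by
    rw [← p2]; ext i j
    simp [hM₂def, Matrix.mul_apply, Matrix.conjTranspose_apply, ptraceA, outer]
  set N₁ : Matrix A A ℂ := star U₁ * M₁ with hN₁def
  set N₂ : Matrix A A ℂ := star U₂ * M₂ with hN₂def
  have hM₁ : M₁ = U₁ * N₁ := by
    rw [hN₁def, ← Matrix.mul_assoc, hU₁, Matrix.one_mul]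
  have hM₂ : M₂ = U₂ * N₂ := by
    rw [hN₂def, ← Matrix.mul_assoc, hU₂, Matrix.one_mul]
  have hNd₁ : N₁ * N₁.conjTranspose = Matrix.diagonal (fun i => (lam i : ℂ)) := by
    have e : N₁ * N₁.conjTranspose = star U₁ * ρ₁ * U₁ := by
      rw [hN₁def, Matrix.conjTranspose_mul, ← hρ₁]
      rw [Matrix.star_eq_conjTranspose, Matrix.conjTranspose_conjTranspose]
      rw [← Matrix.star_eq_conjTranspose U₁]
      noncomm_ring
    rw [e, hU₁def]
    have := Matrix.IsHermitian.conjStarAlgAut_star_eigenvectorUnitary h₁.1.1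
    rw [Unitary.conjStarAlgAut_star_apply] at this
    rw [this]
    rfl
  have hNd₂ : N₂ * N₂.conjTranspose = Matrix.diagonal (fun i => (mu i : ℂ)) := by
    have e : N₂ * N₂.conjTranspose = star U₂ * ρ₂ * U₂ := by
      rw [hN₂def, Matrix.conjTranspose_mul, ← hρ₂]
      rw [Matrix.star_eq_conjTranspose, Matrix.conjTranspose_conjTranspose]
      rw [← Matrix.star_eq_conjTranspose U₂]
      noncomm_ring
    rw [e, hU₂def]
    have := Matrix.IsHermitian.conjStarAlgAut_star_eigenvectorUnitary h₂.1.1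
    rw [Unitary.conjStarAlgAut_star_apply] at this
    rw [this]
    rfl
  -- rows as Euclidean vectors
  set r : A → EuclideanSpace ℂ A := fun i => WithLp.toLp 2 (fun a => N₁ i a) with hrdef
  set s : A → EuclideanSpace ℂ A := fun j => WithLp.toLp 2 (fun a => N₂ j a) with hsdef
  have hrapp : ∀ i a, r i a = N₁ i a := fun _ _ => rfl
  have hsapp : ∀ j a, s j a = N₂ j a := fun _ _ => rfl
  have hinner : ∀ v w : EuclideanSpace ℂ A, ⟪v, w⟫ = ∑ a, (starRingEnd ℂ) (v a) * w a := by
    intro v w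
    simp [PiLp.inner_apply, RCLike.inner_apply, mul_comm]
  have hrr : ∀ i i', ⟪r i, r i'⟫ = if i = i' then ((lam i : ℝ) : ℂ) else 0 := by
    intro i i'
    rw [hinner]
    have e : ∑ a, (starRingEnd ℂ) (r i a) * r i' a = (N₁ * N₁.conjTranspose) i' i := by
      rw [Matrix.mul_apply]
      refine Finset.sum_congr rfl fun a _ => ?_
      rw [Matrix.conjTranspose_apply, hrapp]
      simp only [Complex.star_def]
      ring
    rw [e, hNd₁, Matrix.diagonal_apply]
    by_cases h : i = i'
    · subst h; simp
    · simp [h, Ne.symm h]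
  have hss : ∀ j j', ⟪s j, s j'⟫ = if j = j' then ((mu j : ℝ) : ℂ) else 0 := by
    intro j j'
    rw [hinner]
    have e : ∑ a, (starRingEnd ℂ) (s j a) * s j' a = (N₂ * N₂.conjTranspose) j' j := by
      rw [Matrix.mul_apply]
      refine Finset.sum_congr rfl fun a _ => ?_
      rw [Matrix.conjTranspose_apply, hsapp]
      simp only [Complex.star_def]
      ring
    rw [e, hNd₂, Matrix.diagonal_apply]
    by_cases h : j = j'
    · subst h; simp
    · simp [h, Ne.symm h]
  have hnr : ∀ i, ‖r i‖ = Real.sqrt (lam i) := by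
    intro i
    have h2 := inner_self_eq_norm_sq (𝕜 := ℂ) (r i)
    rw [hrr, if_pos rfl] at h2
    have h3 : lam i = ‖r i‖ ^ 2 := by simpa using h2
    rw [h3, Real.sqrt_sq (norm_nonneg _)]
  have hns : ∀ j, ‖s j‖ = Real.sqrt (mu j) := by
    intro j
    have h2 := inner_self_eq_norm_sq (𝕜 := ℂ) (s j)
    rw [hss, if_pos rfl] at h2
    have h3 : mu j = ‖s j‖ ^ 2 := by simpa using h2
    rw [h3, Real.sqrt_sq (norm_nonneg _)]
  set G : A → A → ℂ := fun i j => ⟪r i, s j⟫ with hGdef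
  have hGapp : ∀ i j, G i j = ⟪r i, s j⟫ := fun _ _ => rfl
  set W : Matrix A A ℂ := star U₁ * U₂ with hWdef
  have hU₁' : star U₁ * U₁ = 1 :=
    Matrix.mem_unitaryGroup_iff'.mp (Matrix.IsHermitian.eigenvectorUnitary h₁.1.1).2
  have hU₂' : star U₂ * U₂ = 1 :=
    Matrix.mem_unitaryGroup_iff'.mp (Matrix.IsHermitian.eigenvectorUnitary h₂.1.1).2
  have hW1 : W * star W = 1 := by
    rw [hWdef, star_mul, star_star]
    calc star U₁ * U₂ * (star U₂ * U₁) = star U₁ * (U₂ * star U₂) * U₁ := by noncomm_ring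
      _ = star U₁ * U₁ := by rw [hU₂, mul_one]
      _ = 1 := hU₁'
  have hW2 : star W * W = 1 := by
    rw [hWdef, star_mul, star_star]
    calc star U₂ * U₁ * (star U₁ * U₂) = star U₂ * (U₁ * star U₁) * U₂ := by noncomm_ring
      _ = star U₂ * U₂ := by rw [hU₁, mul_one]
      _ = 1 := hU₂'
  have hnormSq : ∀ z : ℂ, ‖z‖ ^ 2 = Complex.normSq z := fun z => by
    rw [Complex.sq_norm]
  have hWrow : ∀ i, ∑ j, Complex.normSq (W i j) = 1 := by
    intro i
    have h2 : (W * star W) i i = 1 := by rw [hW1, Matrix.one_apply_eq]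
    rw [Matrix.mul_apply] at h2
    have h3 : ∑ j, ((Complex.normSq (W i j) : ℝ) : ℂ) = 1 := by
      rw [← h2]
      refine Finset.sum_congr rfl fun j _ => ?_
      rw [Matrix.star_eq_conjTranspose, Matrix.conjTranspose_apply, ← Complex.mul_conj,
        Complex.star_def]
    exact_mod_cast h3
  have hWcol : ∀ j, ∑ i, Complex.normSq (W i j) = 1 := by
    intro j
    have h2 : (star W * W) j j = 1 := by rw [hW2, Matrix.one_apply_eq]
    rw [Matrix.mul_apply] at h2
    have h3 : ∑ i, ((Complex.normSq (W i j) : ℝ) : ℂ) = 1 := by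
      rw [← h2]
      refine Finset.sum_congr rfl fun i _ => ?_
      rw [Matrix.star_eq_conjTranspose, Matrix.conjTranspose_apply, ← Complex.mul_conj,
        Complex.star_def]
      ring
    exact_mod_cast h3
  -- the overlap identity
  have hid : inner' ζ₁ ζ₂ = ∑ i, ∑ j, W i j * G i j := by
    have e1 : inner' ζ₁ ζ₂ = Matrix.trace (M₁.conjTranspose * M₂) := by
      rw [inner', Matrix.trace]
      rw [Fintype.sum_prod_type]
      refine Finset.sum_congr rfl fun a _ => ?_
      rw [Matrix.diag, Matrix.mul_apply]
      refine Finset.sum_congr rfl fun b _ => ?_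
      rw [Matrix.conjTranspose_apply, hM₁def, hM₂def]
      rfl
    have e2 : Matrix.trace (M₁.conjTranspose * M₂) = Matrix.trace (W * (N₂ * N₁.conjTranspose)) := by
      rw [hM₁, hM₂, hWdef]
      rw [Matrix.conjTranspose_mul, Matrix.star_eq_conjTranspose U₁]
      rw [show N₁.conjTranspose * U₁.conjTranspose * (U₂ * N₂)
          = N₁.conjTranspose * (U₁.conjTranspose * U₂ * N₂) by noncomm_ring]
      rw [Matrix.trace_mul_comm]
      rw [show U₁.conjTranspose * U₂ * N₂ * N₁.conjTranspose
          = U₁.conjTranspose * U₂ * (N₂ * N₁.conjTranspose) by noncomm_ring]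
    have e3 : Matrix.trace (W * (N₂ * N₁.conjTranspose)) = ∑ i, ∑ j, W i j * G i j := by
      have hWX : ∀ i, (W * (N₂ * N₁.conjTranspose)) i i = ∑ j, W i j * G i j := by
        intro i
        rw [Matrix.mul_apply]
        refine Finset.sum_congr rfl fun j _ => ?_
        congr 1
      rw [Matrix.trace]
      exact Finset.sum_congr rfl fun i _ => hWX i
    rw [e1, e2, e3]
  have htri : ‖inner' ζ₁ ζ₂‖ ≤ ∑ i, ∑ j, ‖W i j‖ * ‖G i j‖ := by
    rw [hid]
    refine (norm_sum_le _ _).trans ?_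
    refine Finset.sum_le_sum fun i _ => ?_
    refine (norm_sum_le _ _).trans ?_
    exact Finset.sum_le_sum fun j _ => le_of_eq (norm_mul _ _)
  set Q : A → A → ℝ := fun i j => Complex.normSq (G i j) / (lam i * mu j) with hQdef
  have hQapp : ∀ i j, Q i j = Complex.normSq (G i j) / (lam i * mu j) := fun _ _ => rfl
  have hQ0 : ∀ i j, 0 ≤ Q i j := fun i j =>
    div_nonneg (Complex.normSq_nonneg _) (mul_nonneg (hlam0 i) (hmu0 j))
  have hterm : ∀ i j, ‖W i j‖ * ‖G i j‖
      ≤ Real.sqrt (lam i * mu j) * ((Complex.normSq (W i j) + Q i j) / 2) := by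
    intro i j
    have hG : ‖G i j‖ ≤ Real.sqrt (lam i) * Real.sqrt (mu j) := by
      have h := norm_inner_le_norm (𝕜 := ℂ) (r i) (s j)
      rwa [hnr, hns] at h
    by_cases hz : lam i * mu j = 0
    · have h0 : Real.sqrt (lam i) * Real.sqrt (mu j) = 0 := by
        rw [← Real.sqrt_mul (hlam0 i), hz, Real.sqrt_zero]
      have hG0 : ‖G i j‖ = 0 := le_antisymm (h0 ▸ hG) (norm_nonneg _)
      rw [hG0, mul_zero]
      have hge : (0:ℝ) ≤ Real.sqrt (lam i * mu j) * ((Complex.normSq (W i j) + Q i j) / 2) := by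
        have := hQ0 i j
        have := Complex.normSq_nonneg (W i j)
        positivity
      exact hge
    · have hlm : 0 < lam i * mu j :=
        lt_of_le_of_ne (mul_nonneg (hlam0 i) (hmu0 j)) (Ne.symm hz)
      set t : ℝ := Real.sqrt (lam i * mu j) with htdef
      have ht0 : 0 < t := Real.sqrt_pos.2 hlm
      have amgm : ‖W i j‖ * (‖G i j‖ / t) ≤ (‖W i j‖ ^ 2 + (‖G i j‖ / t) ^ 2) / 2 := by
        nlinarith [sq_nonneg (‖W i j‖ - ‖G i j‖ / t)]
      have eQ : (‖G i j‖ / t) ^ 2 = Q i j := by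
        rw [div_pow, hnormSq, htdef, Real.sq_sqrt hlm.le, hQapp]
      calc ‖W i j‖ * ‖G i j‖ = t * (‖W i j‖ * (‖G i j‖ / t)) := by
            field_simp
          _ ≤ t * ((‖W i j‖ ^ 2 + (‖G i j‖ / t) ^ 2) / 2) :=
            mul_le_mul_of_nonneg_left amgm ht0.le
          _ = Real.sqrt (lam i * mu j) * ((Complex.normSq (W i j) + Q i j) / 2) := by
            rw [eQ, hnormSq, htdef]
  have hQrow : ∀ i, ∑ j, Q i j ≤ 1 := by
    intro i
    by_cases hli : lam i = 0
    · have : ∀ j, Q i j = 0 := by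
        intro j; rw [hQapp, hli, zero_mul, div_zero]
      rw [Finset.sum_congr rfl fun j _ => this j, Finset.sum_const_zero]
      norm_num
    · have bess := bessel_aux mu s hss (r i)
      rw [hnr, Real.sq_sqrt (hlam0 i)] at bess
      have hsum : ∑ j, Q i j = (∑ j, Complex.normSq (G i j) / mu j) / lam i := by
        rw [Finset.sum_div]
        refine Finset.sum_congr rfl fun j _ => ?_
        rw [hQapp, div_div]
        ring_nf
      rw [hsum, div_le_one (lt_of_le_of_ne (hlam0 i) (Ne.symm hli))]
      calc ∑ j, Complex.normSq (G i j) / mu j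
          = ∑ j, Complex.normSq ⟪s j, r i⟫ / mu j := by
            refine Finset.sum_congr rfl fun j _ => ?_
            congr 1
            rw [← inner_conj_symm, Complex.normSq_conj]
        _ ≤ lam i := bess
  have hQcol : ∀ j, ∑ i, Q i j ≤ 1 := by
    intro j
    by_cases hmj : mu j = 0
    · have : ∀ i, Q i j = 0 := by
        intro i; rw [hQapp, hmj, mul_zero, div_zero]
      rw [Finset.sum_congr rfl fun i _ => this i, Finset.sum_const_zero]
      norm_num
    · have bess := bessel_aux lam r hrr (s j)
      rw [hns, Real.sq_sqrt (hmu0 j)] at bess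
      have hsum : ∑ i, Q i j = (∑ i, Complex.normSq (G i j) / lam i) / mu j := by
        rw [Finset.sum_div]
        refine Finset.sum_congr rfl fun i _ => ?_
        rw [hQapp, div_div]
      rw [hsum, div_le_one (lt_of_le_of_ne (hmu0 j) (Ne.symm hmj))]
      exact bess
  -- reindex to `Fin n` and apply the rearrangement bound
  set a : Fin (Fintype.card A) → ℝ := fun k => Real.sqrt (l1 k) with hadef
  set b : Fin (Fintype.card A) → ℝ := fun k => Real.sqrt (l2 k) with hbdef
  set D : Fin (Fintype.card A) → Fin (Fintype.card A) → ℝ :=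
    fun k l => (Complex.normSq (W (σ₁ k) (σ₂ l)) + Q (σ₁ k) (σ₂ l)) / 2 with hDdef
  have haapp : ∀ k, a k = Real.sqrt (l1 k) := fun _ => rfl
  have hbapp : ∀ k, b k = Real.sqrt (l2 k) := fun _ => rfl
  have hDapp : ∀ k l, D k l = (Complex.normSq (W (σ₁ k) (σ₂ l)) + Q (σ₁ k) (σ₂ l)) / 2 :=
    fun _ _ => rfl
  have hstep : ∑ i, ∑ j, ‖W i j‖ * ‖G i j‖ ≤ ∑ k, ∑ l, a k * b l * D k l := by
    have e : ∑ k, ∑ l, a k * b l * D k l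
        = ∑ i, ∑ j, Real.sqrt (lam i * mu j) * ((Complex.normSq (W i j) + Q i j) / 2) := by
      rw [← Equiv.sum_comp σ₁
        (fun i => ∑ j, Real.sqrt (lam i * mu j) * ((Complex.normSq (W i j) + Q i j) / 2))]
      refine Finset.sum_congr rfl fun k _ => ?_
      rw [← Equiv.sum_comp σ₂
        (fun j => Real.sqrt (lam (σ₁ k) * mu j) * ((Complex.normSq (W (σ₁ k) j) + Q (σ₁ k) j) / 2))]
      refine Finset.sum_congr rfl fun l _ => ?_
      rw [haapp, hbapp, hDapp, hσ1, hσ2, Real.sqrt_mul (hlam0 _)]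
    rw [e]
    exact Finset.sum_le_sum fun i _ => Finset.sum_le_sum fun j _ => hterm i j
  have hcore : ∑ k, ∑ l, a k * b l * D k l ≤ ∑ k, a k * b k := by
    refine substochastic_sum_le a b ?_ ?_ ?_ ?_ D ?_ ?_ ?_
    · exact fun k k' h => Real.sqrt_le_sqrt (hm1 h)
    · exact fun k k' h => Real.sqrt_le_sqrt (hm2 h)
    · exact fun k => Real.sqrt_nonneg _
    · exact fun k => Real.sqrt_nonneg _
    · intro k l
      rw [hDapp]
      have := hQ0 (σ₁ k) (σ₂ l)
      have := Complex.normSq_nonneg (W (σ₁ k) (σ₂ l))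
      positivity
    · intro k
      have e : ∑ l, D k l
          = ((∑ j, Complex.normSq (W (σ₁ k) j)) + ∑ j, Q (σ₁ k) j) / 2 := by
        rw [← Equiv.sum_comp σ₂ (fun j => Complex.normSq (W (σ₁ k) j)),
          ← Equiv.sum_comp σ₂ (fun j => Q (σ₁ k) j), ← Finset.sum_add_distrib,
          ← Finset.sum_div]
      rw [e]
      have := hWrow (σ₁ k)
      have := hQrow (σ₁ k)
      linarith
    · intro l
      have e : ∑ k, D k l
          = ((∑ i, Complex.normSq (W i (σ₂ l))) + ∑ i, Q i (σ₂ l)) / 2 := by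
        rw [← Equiv.sum_comp σ₁ (fun i => Complex.normSq (W i (σ₂ l))),
          ← Equiv.sum_comp σ₁ (fun i => Q i (σ₂ l)), ← Finset.sum_add_distrib,
          ← Finset.sum_div]
      rw [e]
      have := hWcol (σ₂ l)
      have := hQcol (σ₂ l)
      linarith
  have hfin : ∑ k, a k * b k = ∑ k, Real.sqrt (l1 k * l2 k) := by
    refine Finset.sum_congr rfl fun k _ => ?_
    rw [haapp, hbapp, ← Real.sqrt_mul]
    rw [hσ1]
    exact hlam0 _
  calc ‖inner' ζ₁ ζ₂‖ ≤ ∑ i, ∑ j, ‖W i j‖ * ‖G i j‖ := htri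
    _ ≤ ∑ k, ∑ l, a k * b l * D k l := hstep
    _ ≤ ∑ k, a k * b k := hcore
    _ = ∑ k, Real.sqrt (l1 k * l2 k) := hfin


/-- **Bhattacharyya–Wootters overlap bounds the fidelity.** If `l1`, `l2` are the
eigenvalue sequences of `ρ₁`, `ρ₂` arranged in decreasing order, then
`B(λ⁽¹⁾, λ⁽²⁾) = (∑ᵢ √(λᵢ⁽¹⁾ λᵢ⁽²⁾))² ≥ F(ρ₁, ρ₂)`. -/
theorem bhattacharyya_wootters_ge_fidelity
    {A : Type*} [Fintype A] [DecidableEq A]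
    (ρ₁ ρ₂ : Matrix A A ℂ) (h₁ : IsDensityMatrix ρ₁) (h₂ : IsDensityMatrix ρ₂)
    (l1 l2 : Fin (Fintype.card A) → ℝ) (hm1 : Antitone l1) (hm2 : Antitone l2)
    (he1 : ∃ σ : Fin (Fintype.card A) ≃ A, ∀ i, l1 i = h₁.1.1.eigenvalues (σ i))
    (he2 : ∃ σ : Fin (Fintype.card A) ≃ A, ∀ i, l2 i = h₂.1.1.eigenvalues (σ i)) :
    fidelity ρ₁ ρ₂ ≤ (∑ i, Real.sqrt (l1 i * l2 i)) ^ 2 := by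
  obtain ⟨σ₁, hσ1⟩ := he1
  obtain ⟨σ₂, hσ2⟩ := he2
  have hB0 : (0:ℝ) ≤ ∑ i, Real.sqrt (l1 i * l2 i) :=
    Finset.sum_nonneg fun i _ => Real.sqrt_nonneg _
  refine Real.sSup_le ?_ (by positivity)
  rintro x ⟨ζ₁, ζ₂, p1, p2, rfl⟩
  have key := norm_inner'_le h₁ h₂ l1 l2 σ₁ hσ1 σ₂ hσ2 hm1 hm2 ζ₁ ζ₂ p1 p2
  have e : Complex.normSq (inner' ζ₁ ζ₂) = ‖inner' ζ₁ ζ₂‖ ^ 2 := by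
    rw [Complex.sq_norm]
  rw [e]
  exact pow_le_pow_left₀ (norm_nonneg _) key 2

end QI
end
end

section
/- Let ρ be a density matrix on a finite-dimensional complex Hilbert space and |φ⟩ a unit vector with ⟨φ|ρ|φ⟩ ≥ 1 − ε, where 0 ≤ ε < 1/2. Let |φ_max⟩ be a unit eigenvector of ρ corresponding to its largest eigenvalue. Then |⟨φ|φ_max⟩|² ≥ 1 − 2ε. -/
/-!
Let `λ` be the top eigenvalue and `x = |⟨φ_max|φ⟩|²`. The matrix `ρ - λ |φ_max⟩⟨φ_max|` is
positive semidefinite, has trace `1 - λ` and its quadratic form at `φ` only sees the component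
`w = φ - ⟨φ_max|φ⟩ φ_max`, of squared norm `1 - x`; hence
`1 - ε ≤ ⟨φ|ρ|φ⟩ ≤ λ x + (1 - λ)(1 - x)`. Since also `1 - ε ≤ λ ≤ 1`, we get `λ > 1/2` and
`x ≥ (λ - ε) / (2λ - 1) ≥ 1 - 2ε`.
-/

open scoped BigOperators ComplexOrder
open Classical

noncomputable section
namespace Matrix

variable {𝕜 n : Type*} [RCLike 𝕜] [Fintype n] {A : Matrix n n 𝕜} {u : n → 𝕜} {μ : ℝ}

theorem star_dotProduct_sub_smul_eq_zero (hu : star u ⬝ᵥ u = 1) (v : n → 𝕜) :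
    star u ⬝ᵥ (v - (star u ⬝ᵥ v) • u) = 0 := by
  rw [dotProduct_sub, dotProduct_smul, hu, smul_eq_mul, mul_one, sub_self]

theorem re_star_sub_smul_dotProduct_sub_smul (hu : star u ⬝ᵥ u = 1) (v : n → 𝕜) :
    RCLike.re (star (v - (star u ⬝ᵥ v) • u) ⬝ᵥ (v - (star u ⬝ᵥ v) • u)) =
      RCLike.re (star v ⬝ᵥ v) - ‖star u ⬝ᵥ v‖ ^ 2 := by
  have hvu : star v ⬝ᵥ u = star (star u ⬝ᵥ v) := star_dotProduct v u
  simp only [star_sub, star_smul, sub_dotProduct, dotProduct_sub, smul_dotProduct,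
    dotProduct_smul, smul_eq_mul, hu, hvu, RCLike.star_def, RCLike.conj_mul, mul_one, sub_self,
    mul_zero, sub_zero]
  rw [map_sub, ← RCLike.ofReal_pow, RCLike.ofReal_re]

theorem star_dotProduct_sub_smul_vecMulVec_mulVec (v : n → 𝕜) :
    star v ⬝ᵥ (A - (μ : 𝕜) • vecMulVec u (star u)) *ᵥ v =
      star v ⬝ᵥ A *ᵥ v - μ * ‖star u ⬝ᵥ v‖ ^ 2 := by
  rw [sub_mulVec, smul_mulVec, vecMulVec_mulVec, op_smul_eq_smul, dotProduct_sub,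
    dotProduct_smul, dotProduct_smul, star_dotProduct v u, smul_eq_mul, smul_eq_mul,
    RCLike.star_def, RCLike.mul_conj]

theorem IsHermitian.star_dotProduct_mulVec_eq_of_mulVec_eq_smul (hA : A.IsHermitian)
    (hu : star u ⬝ᵥ u = 1) (hAu : A *ᵥ u = (μ : 𝕜) • u) (v : n → 𝕜) :
    star v ⬝ᵥ A *ᵥ v = star (v - (star u ⬝ᵥ v) • u) ⬝ᵥ A *ᵥ (v - (star u ⬝ᵥ v) • u) +
      μ * ‖star u ⬝ᵥ v‖ ^ 2 := by
  have hvu : star v ⬝ᵥ u = star (star u ⬝ᵥ v) := star_dotProduct v u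
  have huA : star u ⬝ᵥ A *ᵥ v = μ * (star u ⬝ᵥ v) := by
    rw [dotProduct_mulVec, ← hA.eq, ← star_mulVec, hAu, star_smul, smul_dotProduct,
      RCLike.star_def, RCLike.conj_ofReal, smul_eq_mul]
  simp only [mulVec_sub, mulVec_smul, hAu, star_sub, star_smul, sub_dotProduct, dotProduct_sub,
    smul_dotProduct, dotProduct_smul, smul_eq_mul, hu, hvu, huA, RCLike.star_def]
  rw [← RCLike.conj_mul]
  ring

theorem PosSemidef.sub_smul_vecMulVec (hA : A.PosSemidef)
    (hu : star u ⬝ᵥ u = 1) (hAu : A *ᵥ u = (μ : 𝕜) • u) :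
    (A - (μ : 𝕜) • vecMulVec u (star u)).PosSemidef := by
  refine .of_dotProduct_mulVec_nonneg
    (hA.1.sub ((posSemidef_vecMulVec_self_star u).1.smul (RCLike.conj_ofReal _))) fun v => ?_
  rw [star_dotProduct_sub_smul_vecMulVec_mulVec,
    hA.1.star_dotProduct_mulVec_eq_of_mulVec_eq_smul hu hAu, add_sub_cancel_right]
  exact hA.dotProduct_mulVec_nonneg _

variable [DecidableEq n]

theorem IsHermitian.posSemidef_smul_one_sub (hA : A.IsHermitian) {t : ℝ}
    (ht : ∀ i, hA.eigenvalues i ≤ t) : ((t : 𝕜) • 1 - A).PosSemidef := by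
  have hdiag : (t : 𝕜) • (1 : Matrix n n 𝕜) - diagonal (RCLike.ofReal ∘ hA.eigenvalues) =
      diagonal (RCLike.ofReal ∘ fun i => t - hA.eigenvalues i) := by
    rw [smul_one_eq_diagonal, diagonal_sub]
    congr 1
    ext i
    simp
  rw [hA.spectral_theorem, ← map_one (Unitary.conjStarAlgAut 𝕜 _ hA.eigenvectorUnitary),
    ← map_smul, ← map_sub, hdiag, Unitary.conjStarAlgAut_apply,
    IsUnit.posSemidef_star_right_conjugate_iff Unitary.isUnit_coe, posSemidef_diagonal_iff]
  intro i
  simpa using ht i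

theorem IsHermitian.re_dotProduct_mulVec_le (hA : A.IsHermitian) {t : ℝ}
    (ht : ∀ i, hA.eigenvalues i ≤ t) (v : n → 𝕜) :
    RCLike.re (star v ⬝ᵥ A *ᵥ v) ≤ t * RCLike.re (star v ⬝ᵥ v) := by
  have := (hA.posSemidef_smul_one_sub ht).re_dotProduct_nonneg v
  simpa [sub_mulVec, smul_mulVec, dotProduct_sub, dotProduct_smul, RCLike.smul_re] using this

theorem PosSemidef.re_dotProduct_mulVec_le_trace (hA : A.PosSemidef) (v : n → 𝕜) :
    RCLike.re (star v ⬝ᵥ A *ᵥ v) ≤ RCLike.re A.trace * RCLike.re (star v ⬝ᵥ v) := by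
  refine hA.1.re_dotProduct_mulVec_le (fun i => ?_) v
  rw [hA.1.trace_eq_sum_eigenvalues, ← RCLike.ofReal_sum, RCLike.ofReal_re]
  exact Finset.single_le_sum (fun j _ => hA.eigenvalues_nonneg j) (Finset.mem_univ i)

theorem PosSemidef.re_dotProduct_mulVec_le_of_mulVec_eq_smul (hA : A.PosSemidef)
    (hu : star u ⬝ᵥ u = 1) (hAu : A *ᵥ u = (μ : 𝕜) • u) (v : n → 𝕜) :
    RCLike.re (star v ⬝ᵥ A *ᵥ v) ≤ μ * ‖star u ⬝ᵥ v‖ ^ 2 +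
      (RCLike.re A.trace - μ) * (RCLike.re (star v ⬝ᵥ v) - ‖star u ⬝ᵥ v‖ ^ 2) := by
  have hsplit := hA.1.star_dotProduct_mulVec_eq_of_mulVec_eq_smul hu hAu v
  set w := v - (star u ⬝ᵥ v) • u
  have hw : star w ⬝ᵥ A *ᵥ w = star w ⬝ᵥ (A - (μ : 𝕜) • vecMulVec u (star u)) *ᵥ w := by
    rw [star_dotProduct_sub_smul_vecMulVec_mulVec, star_dotProduct_sub_smul_eq_zero hu,
      norm_zero]
    simp
  have hbound := (hA.sub_smul_vecMulVec hu hAu).re_dotProduct_mulVec_le_trace w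
  rw [← hw, trace_sub, trace_smul, trace_vecMulVec, dotProduct_comm u, hu, smul_eq_mul, mul_one,
    re_star_sub_smul_dotProduct_sub_smul hu] at hbound
  rw [hsplit, map_add, ← RCLike.ofReal_pow, ← RCLike.ofReal_mul, RCLike.ofReal_re]
  simp only [map_sub, RCLike.ofReal_re] at hbound
  linarith

end Matrix

namespace QI

theorem qform_eq_star_dotProduct_mulVec {A : Type*} [Fintype A] (M : Matrix A A ℂ)
    (v : A → ℂ) : qform M v = star v ⬝ᵥ M.mulVec v := by
  simp [qform, dotProduct, Matrix.mulVec, Finset.mul_sum, mul_assoc]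

theorem overlap_with_top_eigenvector_general
    {A : Type*} [Fintype A] [DecidableEq A]
    (ρ : Matrix A A ℂ) (hρ : IsDensityMatrix ρ)
    (φ φmax : A → ℂ) (hφ : inner' φ φ = 1) (hφmax : inner' φmax φmax = 1)
    (lmax : ℝ) (hEig : ρ.mulVec φmax = (lmax : ℂ) • φmax)
    (hbig : ∀ i, hρ.1.1.eigenvalues i ≤ lmax)
    (ε : ℝ) (hε : ε < 1 / 2)
    (h : 1 - ε ≤ (qform ρ φ).re) :
    1 - 2 * ε ≤ Complex.normSq (inner' φ φmax) := by
  have hφ1 : star φ ⬝ᵥ φ = 1 := hφ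
  have hu : star φmax ⬝ᵥ φmax = 1 := hφmax
  rw [qform_eq_star_dotProduct_mulVec] at h
  have hoverlap : Complex.normSq (inner' φ φmax) = ‖star φmax ⬝ᵥ φ‖ ^ 2 := by
    rw [Complex.normSq_eq_norm_sq, ← norm_star]
    exact congrArg (‖·‖ ^ 2) (Matrix.star_dotProduct φmax φ).symm
  have htop : lmax ≤ 1 := by
    simpa [hEig, hu, hρ.2] using hρ.1.re_dotProduct_mulVec_le_trace φmax
  have hlow : 1 - ε ≤ lmax := h.trans (by simpa [hφ1] using hρ.1.1.re_dotProduct_mulVec_le hbig φ)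
  have hsplit := hρ.1.re_dotProduct_mulVec_le_of_mulVec_eq_smul hu hEig φ
  simp only [hρ.2, hφ1, RCLike.one_re, RCLike.re_to_complex] at hsplit
  rw [hoverlap]
  have hgap : 0 < 2 * lmax - 1 := by linarith
  have hcoef : (1 - 2 * ε) * (2 * lmax - 1) ≤ lmax - ε := by
    nlinarith [mul_nonneg (sub_nonneg.2 htop) (by linarith : (0 : ℝ) ≤ 1 - 2 * ε),
      mul_nonneg (by linarith : 0 ≤ ε) hgap.le]
  exact le_of_mul_le_mul_right (hcoef.trans (by linear_combination h.trans hsplit)) hgap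

/-- If `⟨φ|ρ|φ⟩ ≥ 1 - ε` with `0 ≤ ε < 1/2` and `|φ_max⟩` is a unit eigenvector of `ρ`
for its largest eigenvalue, then `|⟨φ|φ_max⟩|² ≥ 1 - 2ε`. -/
theorem overlap_with_top_eigenvector
    {A : Type*} [Fintype A] [DecidableEq A]
    (ρ : Matrix A A ℂ) (hρ : IsDensityMatrix ρ)
    (φ φmax : A → ℂ) (hφ : inner' φ φ = 1) (hφmax : inner' φmax φmax = 1)
    (lmax : ℝ) (hEig : ρ.mulVec φmax = (lmax : ℂ) • φmax)
    (hbig : ∀ i, hρ.1.1.eigenvalues i ≤ lmax)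
    (ε : ℝ) (hε0 : 0 ≤ ε) (hε : ε < 1 / 2)
    (h : 1 - ε ≤ (qform ρ φ).re) :
    1 - 2 * ε ≤ Complex.normSq (inner' φ φmax) :=
  overlap_with_top_eigenvector_general ρ hρ φ φmax hφ hφmax lmax hEig hbig ε hε h

end QI
end
end

section
/- Let H_A ⊗ H_B be a finite-dimensional bipartite complex Hilbert space, |φ⟩ ∈ H_A ⊗ H_B a unit vector, σ a density matrix on H_A ⊗ H_B, and let ρ = (1 − λ)|φ⟩⟨φ| + λσ with 0 ≤ λ ≤ ε ≤ 1. Then |S(Tr_A ρ) − S(Tr_A |φ⟩⟨φ|)| ≤ ε·log₂(dim H_B) + 1. -/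
open scoped BigOperators ComplexOrder
open Classical

noncomputable section
namespace QI

/-!
Tracing out `A` is linear, so `Tr_A ρ = (1 - λ) φ_B + λ σ_B` for the density matrices
`φ_B = Tr_A |φ⟩⟨φ|` and `σ_B = Tr_A σ`.
The diagonal of a density matrix in any orthonormal basis `U` is its spectrum multiplied by the
doubly stochastic matrix `|U i j|²`, so by concavity of `-x log x` its Shannon entropy dominates
the von Neumann entropy (Schur concavity). In the eigenbasis of `φ_B` the diagonal of `Tr_A ρ` is
`(1 - λ) spec φ_B + λ q` for a probability vector `q`, whence
`S(Tr_A ρ) ≤ (1 - λ) S(φ_B) + λ log d + h(λ)`. In the eigenbasis of `Tr_A ρ` its spectrum is a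
mixture of the diagonals of `φ_B` and `σ_B`, whence `S(Tr_A ρ) ≥ (1 - λ) S(φ_B)`. As
`S(φ_B) ≤ log d` and `h(λ) ≤ log 2`, both sides lie within `λ log d + log 2` of `S(φ_B)`.
-/

open Real Matrix

section Shannon

variable {ι : Type*} [Fintype ι]

lemma negMulLog_add_le {x y : ℝ} (hx : 0 ≤ x) (hy : 0 ≤ y) :
    negMulLog (x + y) ≤ negMulLog x + negMulLog y := by
  rcases hx.eq_or_lt with rfl | hx
  · simp
  rcases hy.eq_or_lt with rfl | hy
  · simp
  have hlogx : log x ≤ log (x + y) := log_le_log hx (by linarith)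
  have hlogy : log y ≤ log (x + y) := log_le_log hy (by linarith)
  simp only [negMulLog, neg_mul]
  nlinarith

def shannonEntropy (p : ι → ℝ) : ℝ := ∑ i, negMulLog (p i)

lemma shannonEntropy_nonneg {p : ι → ℝ} (hp : p ∈ stdSimplex ℝ ι) : 0 ≤ shannonEntropy p :=
  Finset.sum_nonneg fun i _ => negMulLog_nonneg (hp.1 i) <|
    hp.2 ▸ Finset.single_le_sum (fun j _ => hp.1 j) (Finset.mem_univ i)

lemma shannonEntropy_le_log_card {p : ι → ℝ} (hp : p ∈ stdSimplex ℝ ι) :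
    shannonEntropy p ≤ log (Fintype.card ι) := by
  have : Nonempty ι := by
    by_contra h
    rw [not_nonempty_iff] at h
    simpa using hp.2
  have hd : (0 : ℝ) < Fintype.card ι := by exact_mod_cast Fintype.card_pos
  have hJensen := concaveOn_negMulLog.le_map_sum (t := Finset.univ)
    (w := fun _ => (Fintype.card ι : ℝ)⁻¹) (p := p) (fun _ _ => by positivity)
    (by simp [hd.ne']) (fun i _ => hp.1 i)
  simp only [smul_eq_mul, ← Finset.mul_sum, hp.2, mul_one] at hJensen
  rw [show negMulLog (Fintype.card ι : ℝ)⁻¹ = (Fintype.card ι : ℝ)⁻¹ * log (Fintype.card ι) by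
    simp [negMulLog, log_inv]] at hJensen
  exact le_of_mul_le_mul_left hJensen (inv_pos.2 hd)

lemma shannonEntropy_le_mulVec [DecidableEq ι] {W : Matrix ι ι ℝ}
    (hW : W ∈ doublyStochastic ℝ ι) {p : ι → ℝ} (hp : ∀ i, 0 ≤ p i) :
    shannonEntropy p ≤ shannonEntropy (W *ᵥ p) := by
  calc shannonEntropy p = ∑ i, ∑ j, W i j * negMulLog (p j) := by
        rw [shannonEntropy, Finset.sum_comm]
        simp [← Finset.sum_mul, sum_col_of_mem_doublyStochastic hW]
    _ ≤ shannonEntropy (W *ᵥ p) := Finset.sum_le_sum fun i _ => by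
        simpa [mulVec, dotProduct] using concaveOn_negMulLog.le_map_sum (t := Finset.univ)
          (w := W i) (p := p) (fun j _ => nonneg_of_mem_doublyStochastic hW)
          (sum_row_of_mem_doublyStochastic hW i) (fun j _ => hp j)

lemma shannonEntropy_mix_le {p q : ι → ℝ} (hp : p ∈ stdSimplex ℝ ι) (hq : q ∈ stdSimplex ℝ ι)
    {t : ℝ} (ht₀ : 0 ≤ t) (ht₁ : t ≤ 1) :
    shannonEntropy ((1 - t) • p + t • q) ≤
      (1 - t) * shannonEntropy p + t * shannonEntropy q + binEntropy t := by
  have hpoint : ∀ i, negMulLog ((1 - t) * p i + t * q i) ≤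
      ((1 - t) * negMulLog (p i) + t * negMulLog (q i)) +
        (p i * negMulLog (1 - t) + q i * negMulLog t) := fun i => by
    calc _ ≤ negMulLog ((1 - t) * p i) + negMulLog (t * q i) :=
          negMulLog_add_le (mul_nonneg (by linarith) (hp.1 i)) (mul_nonneg ht₀ (hq.1 i))
      _ = _ := by rw [negMulLog_mul, negMulLog_mul]; ring
  calc shannonEntropy ((1 - t) • p + t • q)
      ≤ ∑ i, (((1 - t) * negMulLog (p i) + t * negMulLog (q i)) +
          (p i * negMulLog (1 - t) + q i * negMulLog t)) :=
        Finset.sum_le_sum fun i _ => hpoint i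
    _ = (1 - t) * shannonEntropy p + t * shannonEntropy q + binEntropy t := by
        simp only [Finset.sum_add_distrib, ← Finset.mul_sum, ← Finset.sum_mul, hp.2, hq.2,
          shannonEntropy, binEntropy_eq_negMulLog_add_negMulLog_one_sub]
        ring

lemma le_shannonEntropy_mix {p q : ι → ℝ} (hp : ∀ i, 0 ≤ p i) (hq : ∀ i, 0 ≤ q i)
    {t : ℝ} (ht₀ : 0 ≤ t) (ht₁ : t ≤ 1) :
    (1 - t) * shannonEntropy p + t * shannonEntropy q ≤ shannonEntropy ((1 - t) • p + t • q) := by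
  simp only [shannonEntropy, Finset.mul_sum, ← Finset.sum_add_distrib]
  exact Finset.sum_le_sum fun i _ => by
    simpa using concaveOn_negMulLog.2 (Set.mem_Ici.2 (hp i)) (Set.mem_Ici.2 (hq i))
      (by linarith : 0 ≤ 1 - t) ht₀ (by ring)

end Shannon

section Spectral

variable {n : Type*} [Fintype n] [DecidableEq n]

def diagInBasis (V : unitaryGroup n ℂ) (M : Matrix n n ℂ) : n → ℝ :=
  fun i => ((star (V : Matrix n n ℂ) * M * (V : Matrix n n ℂ)) i i).re

lemma diagInBasis_mix (V : unitaryGroup n ℂ) (M N : Matrix n n ℂ) (s t : ℝ) :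
    diagInBasis V ((s : ℂ) • M + (t : ℂ) • N) = s • diagInBasis V M + t • diagInBasis V N := by
  ext i
  simp [diagInBasis, Matrix.mul_add, Matrix.add_mul]

lemma sum_diagInBasis (V : unitaryGroup n ℂ) (M : Matrix n n ℂ) :
    ∑ i, diagInBasis V M i = M.trace.re := by
  have h : (star (V : Matrix n n ℂ) * M * V).trace = M.trace := by
    rw [Matrix.trace_mul_cycle, Matrix.mem_unitaryGroup_iff.1 V.2, one_mul]
  simp only [diagInBasis, ← Complex.re_sum]
  exact congrArg Complex.re h

lemma diagInBasis_eigenvectorUnitary {M : Matrix n n ℂ} (hM : M.IsHermitian) :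
    diagInBasis hM.eigenvectorUnitary M = hM.eigenvalues := by
  ext i
  rw [diagInBasis, ← Unitary.conjStarAlgAut_star_apply (S := ℂ),
    hM.conjStarAlgAut_star_eigenvectorUnitary]
  simp

lemma sum_normSq_row (U : unitaryGroup n ℂ) (i : n) : ∑ j, Complex.normSq (U i j) = 1 := by
  have h := congrArg (fun X : Matrix n n ℂ => (X i i).re) (Unitary.coe_mul_star_self U)
  simpa [Matrix.mul_apply, Complex.mul_conj, ← Complex.ofReal_sum] using h

lemma normSq_mem_doublyStochastic (U : unitaryGroup n ℂ) :
    Matrix.of (fun i j => Complex.normSq (U i j)) ∈ doublyStochastic ℝ n :=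
  mem_doublyStochastic_iff_sum.2 ⟨fun i j => Complex.normSq_nonneg _, sum_normSq_row U,
    fun j => by simpa [Matrix.star_apply] using sum_normSq_row (star U) j⟩

lemma diagInBasis_eq_mulVec_eigenvalues {M : Matrix n n ℂ} (hM : M.IsHermitian)
    (V : unitaryGroup n ℂ) :
    diagInBasis V M = Matrix.of (fun i j =>
        Complex.normSq ((star V * hM.eigenvectorUnitary : unitaryGroup n ℂ) i j)) *ᵥ
      hM.eigenvalues := by
  set X : Matrix n n ℂ := ((star V * hM.eigenvectorUnitary : unitaryGroup n ℂ) : Matrix n n ℂ)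
  have hconj : star (V : Matrix n n ℂ) * M * (V : Matrix n n ℂ) =
      X * diagonal (RCLike.ofReal ∘ hM.eigenvalues) * star X := by
    conv_lhs => rw [hM.spectral_theorem, Unitary.conjStarAlgAut_apply]
    simp only [X, Submonoid.coe_mul, Unitary.coe_star, StarMul.star_mul, star_star]
    noncomm_ring
  ext i
  rw [diagInBasis, hconj, Matrix.mul_apply, Complex.re_sum]
  refine Finset.sum_congr rfl fun j _ => ?_
  simp only [Matrix.mul_diagonal, Matrix.star_apply, Function.comp_apply, Matrix.of_apply]
  rw [mul_right_comm, Complex.star_def, Complex.mul_conj, Complex.re_ofReal_mul]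
  rfl

end Spectral

section Density

variable {n : Type*} [Fintype n]

lemma IsDensityMatrix.mix {P Q : Matrix n n ℂ} (hP : IsDensityMatrix P) (hQ : IsDensityMatrix Q)
    {t : ℝ} (ht₀ : 0 ≤ t) (ht₁ : t ≤ 1) :
    IsDensityMatrix (((1 - t : ℝ) : ℂ) • P + ((t : ℝ) : ℂ) • Q) := by
  refine ⟨(hP.1.smul ?_).add (hQ.1.smul ?_), ?_⟩
  · exact_mod_cast sub_nonneg.2 ht₁
  · exact_mod_cast ht₀
  · rw [trace_add, trace_smul, trace_smul, hP.2, hQ.2]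
    simp

variable [DecidableEq n]

lemma vnEntropy_eq_shannonEntropy_div {M : Matrix n n ℂ} (hM : M.IsHermitian) :
    vnEntropy M = shannonEntropy hM.eigenvalues / log 2 := by
  rw [vnEntropy, dif_pos hM, shannonEntropy, Finset.sum_div, ← Finset.sum_neg_distrib]
  refine Finset.sum_congr rfl fun i _ => ?_
  simp only [negMulLog, logb]
  ring

lemma shannonEntropy_eigenvalues_le_diagInBasis {M : Matrix n n ℂ} (hM : M.PosSemidef)
    (V : unitaryGroup n ℂ) :
    shannonEntropy hM.isHermitian.eigenvalues ≤ shannonEntropy (diagInBasis V M) := by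
  rw [diagInBasis_eq_mulVec_eigenvalues hM.isHermitian]
  exact shannonEntropy_le_mulVec (normSq_mem_doublyStochastic _) hM.eigenvalues_nonneg

lemma IsDensityMatrix.eigenvalues_mem_stdSimplex {ρ : Matrix n n ℂ} (hρ : IsDensityMatrix ρ) :
    hρ.1.isHermitian.eigenvalues ∈ stdSimplex ℝ n := by
  refine ⟨hρ.1.eigenvalues_nonneg, ?_⟩
  rw [← diagInBasis_eigenvectorUnitary, sum_diagInBasis, hρ.2, Complex.one_re]

lemma IsDensityMatrix.diagInBasis_mem_stdSimplex {ρ : Matrix n n ℂ} (hρ : IsDensityMatrix ρ)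
    (V : unitaryGroup n ℂ) : diagInBasis V ρ ∈ stdSimplex ℝ n := by
  refine ⟨fun i => ?_, by rw [sum_diagInBasis, hρ.2, Complex.one_re]⟩
  rw [diagInBasis_eq_mulVec_eigenvalues hρ.1.isHermitian]
  exact Finset.sum_nonneg fun j _ =>
    mul_nonneg (Complex.normSq_nonneg _) (hρ.1.eigenvalues_nonneg j)

lemma shannonEntropy_eigenvalues_mix_le {P Q : Matrix n n ℂ} (hP : IsDensityMatrix P)
    (hQ : IsDensityMatrix Q) {t : ℝ} (ht₀ : 0 ≤ t) (ht₁ : t ≤ 1) :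
    shannonEntropy (hP.mix hQ ht₀ ht₁).1.isHermitian.eigenvalues ≤
      shannonEntropy hP.1.isHermitian.eigenvalues + t * log (Fintype.card n) + log 2 := by
  set V := hP.1.isHermitian.eigenvectorUnitary
  have hPent := shannonEntropy_nonneg hP.eigenvalues_mem_stdSimplex
  have hQent := shannonEntropy_le_log_card (hQ.diagInBasis_mem_stdSimplex V)
  calc _ ≤ shannonEntropy (diagInBasis V (((1 - t : ℝ) : ℂ) • P + ((t : ℝ) : ℂ) • Q)) :=
        shannonEntropy_eigenvalues_le_diagInBasis (hP.mix hQ ht₀ ht₁).1 V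
    _ = shannonEntropy ((1 - t) • hP.1.isHermitian.eigenvalues + t • diagInBasis V Q) := by
        rw [diagInBasis_mix, diagInBasis_eigenvectorUnitary]
    _ ≤ (1 - t) * shannonEntropy hP.1.isHermitian.eigenvalues +
          t * shannonEntropy (diagInBasis V Q) + binEntropy t :=
        shannonEntropy_mix_le hP.eigenvalues_mem_stdSimplex (hQ.diagInBasis_mem_stdSimplex V)
          ht₀ ht₁
    _ ≤ _ := by nlinarith [binEntropy_le_log_two (p := t), mul_le_mul_of_nonneg_left hQent ht₀]

lemma le_shannonEntropy_eigenvalues_mix {P Q : Matrix n n ℂ} (hP : IsDensityMatrix P)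
    (hQ : IsDensityMatrix Q) {t : ℝ} (ht₀ : 0 ≤ t) (ht₁ : t ≤ 1) :
    shannonEntropy hP.1.isHermitian.eigenvalues - t * log (Fintype.card n) ≤
      shannonEntropy (hP.mix hQ ht₀ ht₁).1.isHermitian.eigenvalues := by
  set V := (hP.mix hQ ht₀ ht₁).1.isHermitian.eigenvectorUnitary
  have hPV := shannonEntropy_eigenvalues_le_diagInBasis hP.1 V
  have hPent := shannonEntropy_le_log_card hP.eigenvalues_mem_stdSimplex
  have hQent := shannonEntropy_nonneg (hQ.diagInBasis_mem_stdSimplex V)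
  calc _ ≤ (1 - t) * shannonEntropy (diagInBasis V P) + t * shannonEntropy (diagInBasis V Q) := by
        nlinarith [mul_le_mul_of_nonneg_left hPent ht₀]
    _ ≤ shannonEntropy ((1 - t) • diagInBasis V P + t • diagInBasis V Q) :=
        le_shannonEntropy_mix (hP.diagInBasis_mem_stdSimplex V).1
          (hQ.diagInBasis_mem_stdSimplex V).1 ht₀ ht₁
    _ = _ := by rw [← diagInBasis_mix, diagInBasis_eigenvectorUnitary]

theorem abs_vnEntropy_mix_sub_le {P Q : Matrix n n ℂ} (hP : IsDensityMatrix P)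
    (hQ : IsDensityMatrix Q) {t : ℝ} (ht₀ : 0 ≤ t) (ht₁ : t ≤ 1) :
    |vnEntropy (((1 - t : ℝ) : ℂ) • P + ((t : ℝ) : ℂ) • Q) - vnEntropy P| ≤
      t * logb 2 (Fintype.card n) + 1 := by
  have hlog2 : 0 < log 2 := log_pos one_lt_two
  have hupper := shannonEntropy_eigenvalues_mix_le hP hQ ht₀ ht₁
  have hlower := le_shannonEntropy_eigenvalues_mix hP hQ ht₀ ht₁
  rw [vnEntropy_eq_shannonEntropy_div (hP.mix hQ ht₀ ht₁).1.isHermitian,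
    vnEntropy_eq_shannonEntropy_div hP.1.isHermitian, ← sub_div, abs_div, abs_of_pos hlog2,
    div_le_iff₀ hlog2, add_mul, one_mul, logb, mul_div_assoc', div_mul_cancel₀ _ hlog2.ne', abs_le]
  constructor <;> linarith

end Density

section PartialTrace

variable {A B : Type*} [Fintype A] [Fintype B]

lemma ptraceA_eq_sum_submatrix (M : Matrix (A × B) (A × B) ℂ) :
    ptraceA M = ∑ a, M.submatrix (Prod.mk a) (Prod.mk a) := by
  ext i j
  simp [ptraceA, Matrix.sum_apply]

lemma trace_ptraceA (M : Matrix (A × B) (A × B) ℂ) : (ptraceA M).trace = M.trace := by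
  simp only [Matrix.trace, Matrix.diag, ptraceA, Matrix.of_apply]
  rw [Fintype.sum_prod_type, Finset.sum_comm]

lemma ptraceA_add_smul (c d : ℂ) (M N : Matrix (A × B) (A × B) ℂ) :
    ptraceA (c • M + d • N) = c • ptraceA M + d • ptraceA N := by
  ext i j
  simp [ptraceA, Finset.mul_sum, Finset.sum_add_distrib]

lemma IsDensityMatrix.ptraceA {ρ : Matrix (A × B) (A × B) ℂ} (hρ : IsDensityMatrix ρ) :
    IsDensityMatrix (ptraceA ρ) :=
  ⟨ptraceA_eq_sum_submatrix ρ ▸ posSemidef_sum _ fun _ _ => hρ.1.submatrix _,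
    (trace_ptraceA ρ).trans hρ.2⟩

lemma isDensityMatrix_outer {v : A → ℂ} (hv : inner' v v = 1) : IsDensityMatrix (outer v) :=
  ⟨posSemidef_vecMulVec_self_star v, (Finset.sum_congr rfl fun _ _ => mul_comm _ _).trans hv⟩

end PartialTrace

/-- **Eq. (plan1).** For `ρ = (1-λ)|φ⟩⟨φ| + λσ` with `0 ≤ λ ≤ ε ≤ 1`, the entropy of the
reduced state of `ρ` on the second factor is within `ε log₂ (dim H_B) + 1` of that of the
reduced state of `|φ⟩⟨φ|`. -/
theorem entropy_reduced_mixture_close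
    {A B : Type*} [Fintype A] [Fintype B] [DecidableEq B]
    (φ : A × B → ℂ) (hφ : inner' φ φ = 1)
    (σ : Matrix (A × B) (A × B) ℂ) (hσ : IsDensityMatrix σ)
    (lam ε : ℝ) (h0 : 0 ≤ lam) (h1 : lam ≤ ε) (h2 : ε ≤ 1) :
    |vnEntropy (ptraceA (((1 - lam : ℝ) : ℂ) • outer φ + ((lam : ℝ) : ℂ) • σ)) -
        vnEntropy (ptraceA (outer φ))| ≤
      ε * Real.logb 2 (Fintype.card B) + 1 := by
  rw [ptraceA_add_smul]
  calc _ ≤ lam * logb 2 (Fintype.card B) + 1 :=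
        abs_vnEntropy_mix_sub_le (isDensityMatrix_outer hφ).ptraceA hσ.ptraceA h0 (h1.trans h2)
    _ ≤ ε * logb 2 (Fintype.card B) + 1 := by
        gcongr
        exact div_nonneg (log_natCast_nonneg _) (log_nonneg one_le_two)

end QI
end
end

section
/- Let ρ be a density matrix on the Hilbert space of N qubits, (ℂ²)^⊗N. For every integer k with 0 ≤ k ≤ ⌊N/2⌋, the sum over all subsets i ⊆ {1,…,N} of cardinality N − k of the differences S(ρ_i) − S(ρ_{ī}) satisfies ∑_{|i| = N−k} (S(ρ_i) − S(ρ_{ī})) ≤ C(N, k)·(N − 2k), where ī is the complement of i and C(N, k) is the binomial coefficient. -/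
open scoped BigOperators ComplexOrder
open Classical

noncomputable section
namespace QI

/-- The reduced density matrix `ρ_s` of an `N`-qubit state on the qubits in the subset
`s ⊆ {1,…,N}`, obtained by tracing out the qubits in the complement of `s`. -/
def reduce {N : ℕ} (ρ : Matrix (Fin N → Fin 2) (Fin N → Fin 2) ℂ) (s : Finset (Fin N)) :
    Matrix ({x // x ∈ s} → Fin 2) ({x // x ∈ s} → Fin 2) ℂ :=
  Matrix.of fun f g => ∑ h : {x // x ∈ sᶜ} → Fin 2,
    ρ (fun j => if hj : j ∈ s then f ⟨j, hj⟩ else h ⟨j, Finset.mem_compl.mpr hj⟩)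
      (fun j => if hj : j ∈ s then g ⟨j, hj⟩ else h ⟨j, Finset.mem_compl.mpr hj⟩)

/-- The coherent-information expression for the quantum erasure channel with erasure
probability `p` on an `N`-qubit source `ρ`:
`I(ρ,p,N) = ∑ₖ pᵏ (1-p)^{N-k} ∑_{|i| = N-k} (S(ρ_i) - S(ρ_ī))`. -/
def cohInfo (N : ℕ) (ρ : Matrix (Fin N → Fin 2) (Fin N → Fin 2) ℂ) (p : ℝ) : ℝ :=
  ∑ k ∈ Finset.range (N + 1), p ^ k * (1 - p) ^ (N - k) *
    ∑ s ∈ Finset.powersetCard (N - k) (Finset.univ : Finset (Fin N)),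
      (vnEntropy (reduce ρ s) - vnEntropy (reduce ρ sᶜ))


open Matrix Polynomial Kronecker
set_option linter.unusedSectionVars false
set_option maxHeartbeats 1000000


/-- Gibbs' inequality. -/
lemma gibbs {A : Type*} [Fintype A] (p q : A → ℝ) (hp : ∀ i, 0 ≤ p i) (hq : ∀ i, 0 ≤ q i)
    (hsp : ∑ i, p i = 1) (hsq : ∑ i, q i = 1) (hsupp : ∀ i, q i = 0 → p i = 0) :
    -∑ i, p i * Real.log (p i) ≤ -∑ i, p i * Real.log (q i) := by
  have key : ∀ i, p i * Real.log (q i) - p i * Real.log (p i) ≤ q i - p i := by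
    intro i
    rcases eq_or_lt_of_le (hp i) with h | h
    · simp [← h]
      exact hq i
    · have hqi : 0 < q i := by
        rcases eq_or_lt_of_le (hq i) with h2 | h2
        · exact absurd (hsupp i h2.symm) (by linarith)
        · exact h2
      have : Real.log (q i) - Real.log (p i) ≤ q i / p i - 1 := by
        rw [← Real.log_div hqi.ne' h.ne']
        exact Real.log_le_sub_one_of_pos (by positivity)
      calc p i * Real.log (q i) - p i * Real.log (p i)
          = p i * (Real.log (q i) - Real.log (p i)) := by ring
        _ ≤ p i * (q i / p i - 1) := by nlinarith
        _ = q i - p i := by field_simp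
  have hsum : ∑ i, (p i * Real.log (q i) - p i * Real.log (p i)) ≤ ∑ i, (q i - p i) :=
    Finset.sum_le_sum fun i _ => key i
  rw [Finset.sum_sub_distrib] at hsum
  rw [Finset.sum_sub_distrib, hsp, hsq] at hsum
  linarith

/-- Characteristic polynomial is invariant under unitary conjugation. -/
lemma charpoly_conj {n : Type*} [Fintype n] [DecidableEq n] (V M : Matrix n n ℂ)
    (hV1 : star V * V = 1) (hV2 : V * star V = 1) :
    (V * M * star V).charpoly = M.charpoly := by
  have hmap : ∀ (P Q : Matrix n n ℂ), (P * Q).map (C : ℂ →+* ℂ[X]) = P.map C * Q.map C := by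
    intro P Q; exact Matrix.map_mul
  have hc : charmatrix (V * M * star V) =
      V.map (C : ℂ →+* ℂ[X]) * charmatrix M * (star V).map C := by
    unfold charmatrix
    rw [mul_sub, sub_mul]
    congr 1
    · rw [← (Matrix.scalar_commute (X : ℂ[X]) (fun r => Commute.all _ _) _).eq, mul_assoc,
        ← hmap, hV2]
      simp
    · simp only [RingHom.mapMatrix_apply]
      rw [← hmap, ← hmap]
  unfold Matrix.charpoly
  rw [hc, det_mul, det_mul, mul_comm, ← mul_assoc, ← det_mul, ← hmap, hV1]
  simp

lemma charpoly_diagonal {n : Type*} [Fintype n] [DecidableEq n] (d : n → ℂ) :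
    (Matrix.diagonal d).charpoly = ∏ i, (X - C (d i)) := by
  unfold Matrix.charpoly
  have : charmatrix (Matrix.diagonal d) = Matrix.diagonal (fun i => X - C (d i)) := by
    ext i j
    by_cases h : i = j
    · subst h; simp
    · simp [charmatrix_apply_ne _ _ _ h, Matrix.diagonal_apply_ne _ h, diagonal_apply_ne d h]
  rw [this, det_diagonal]

/-- The multiset of eigenvalues of a Hermitian matrix is determined by any unitary
diagonalization. -/
lemma eigenvalues_multiset {n : Type*} [Fintype n] [DecidableEq n] {M : Matrix n n ℂ}
    (hM : M.IsHermitian) {V : Matrix n n ℂ} (hV1 : star V * V = 1) (hV2 : V * star V = 1)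
    {d : n → ℝ} (h : M = V * Matrix.diagonal (fun i => (d i : ℂ)) * star V) :
    Multiset.map hM.eigenvalues Finset.univ.val = Multiset.map d Finset.univ.val := by
  have key : ∀ (W : Matrix n n ℂ), star W * W = 1 → W * star W = 1 → ∀ (c : n → ℝ),
      M = W * Matrix.diagonal (fun i => (c i : ℂ)) * star W →
      M.charpoly.roots = Multiset.map (fun i => (c i : ℂ)) Finset.univ.val := by
    intro W hW1 hW2 c hMc
    rw [hMc, charpoly_conj W _ hW1 hW2, charpoly_diagonal]
    have : ∏ i, (X - C ((c i : ℂ))) =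
        (Multiset.map (fun a => X - C a) (Multiset.map (fun i => (c i : ℂ)) Finset.univ.val)).prod := by
      rw [Multiset.map_map]; rfl
    rw [this, Polynomial.roots_multiset_prod_X_sub_C]
  have h1 := key _ hV1 hV2 _ h
  have hU1 : star (hM.eigenvectorUnitary : Matrix n n ℂ) * (hM.eigenvectorUnitary : Matrix n n ℂ) = 1 := by
    exact Unitary.coe_star_mul_self hM.eigenvectorUnitary
  have hU2 : (hM.eigenvectorUnitary : Matrix n n ℂ) * star (hM.eigenvectorUnitary : Matrix n n ℂ) = 1 := by
    exact Unitary.coe_mul_star_self hM.eigenvectorUnitary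
  have h2 := key _ hU1 hU2 hM.eigenvalues hM.spectral_theorem
  have : Multiset.map (fun i => (hM.eigenvalues i : ℂ)) Finset.univ.val =
      Multiset.map (fun i => (d i : ℂ)) Finset.univ.val := by rw [← h1, ← h2]
  have h3 : Multiset.map (fun x : ℝ => (x : ℂ)) (Multiset.map hM.eigenvalues Finset.univ.val) =
      Multiset.map (fun x : ℝ => (x : ℂ)) (Multiset.map d Finset.univ.val) := by
    rw [Multiset.map_map, Multiset.map_map]; exact this
  exact Multiset.map_injective Complex.ofReal_injective h3

/-- Sums of a function of eigenvalues can be computed from any unitary diagonalization. -/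
lemma sum_g_eigenvalues {n : Type*} [Fintype n] [DecidableEq n] {M : Matrix n n ℂ}
    (hM : M.IsHermitian) {V : Matrix n n ℂ} (hV1 : star V * V = 1) (hV2 : V * star V = 1)
    {d : n → ℝ} (h : M = V * Matrix.diagonal (fun i => (d i : ℂ)) * star V) (g : ℝ → ℝ) :
    ∑ i, g (hM.eigenvalues i) = ∑ i, g (d i) := by
  have := eigenvalues_multiset hM hV1 hV2 h
  have h4 : Multiset.map g (Multiset.map hM.eigenvalues Finset.univ.val) =
      Multiset.map g (Multiset.map d Finset.univ.val) := by rw [this]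
  rw [Multiset.map_map, Multiset.map_map] at h4
  have h5 := congrArg Multiset.sum h4
  rw [Finset.sum, Finset.sum, ← Multiset.map_map, ← Multiset.map_map] at *
  simpa using h5




lemma col_mul_eq {n : Type*} [Fintype n] (M N : Matrix n n ℂ) (j : n) :
    (fun k => (M * N) k j) = M *ᵥ (fun l => N l j) := by
  funext k; simp [Matrix.mul_apply, Matrix.mulVec, dotProduct]

/-- Klein-type inequality. -/
lemma klein {n : Type*} [Fintype n] [DecidableEq n] {ρ : Matrix n n ℂ}
    (hρ : ρ.PosSemidef) (hρt : ρ.trace = 1)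
    {V : Matrix n n ℂ} (hV1 : star V * V = 1) (hV2 : V * star V = 1)
    {μ : n → ℝ} (hμ0 : ∀ j, 0 ≤ μ j) (hμ1 : ∑ j, μ j = 1)
    (hker : ∀ j, μ j = 0 → ρ *ᵥ (fun k => V k j) = 0) :
    -∑ i, hρ.1.eigenvalues i * Real.log (hρ.1.eigenvalues i)
      ≤ -∑ j, ((star V * ρ * V) j j).re * Real.log (μ j) := by
  set hH := hρ.1 with hHdef
  set U := (hH.eigenvectorUnitary : Matrix n n ℂ) with hUdef
  set lam := hH.eigenvalues with hlamdef
  have hU1 : star U * U = 1 := Unitary.coe_star_mul_self hH.eigenvectorUnitary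
  have hU2 : U * star U = 1 := Unitary.coe_mul_star_self hH.eigenvectorUnitary
  have hD : star U * ρ * U = Matrix.diagonal (fun i => (lam i : ℂ)) := by
    simpa [Function.comp_def, Unitary.conjStarAlgAut_star_apply] using hH.conjStarAlgAut_star_eigenvectorUnitary
  have hspec : ρ = U * Matrix.diagonal (fun i => (lam i : ℂ)) * star U := by
    simpa [Function.comp_def] using hH.spectral_theorem
  set W := star U * V with hWdef
  have hstarW : star W = star V * U := by simp [hWdef]
  have hW1 : star W * W = 1 := by
    rw [hstarW, hWdef, mul_assoc, ← mul_assoc U (star U) V, hU2, one_mul, hV1]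
  have hW2 : W * star W = 1 := by
    rw [hstarW, hWdef, mul_assoc, ← mul_assoc V (star V) U, hV2, one_mul, hU1]
  set p : n → n → ℝ := fun i j => Complex.normSq (W i j) with hpdef
  have hp0 : ∀ i j, 0 ≤ p i j := fun i j => Complex.normSq_nonneg _
  have hrow : ∀ i, ∑ j, p i j = 1 := by
    intro i
    have h1 : (W * star W) i i = 1 := by rw [hW2]; simp
    rw [Matrix.mul_apply] at h1
    have h2 : ∀ j, W i j * (star W) j i = ((p i j : ℝ) : ℂ) := by
      intro j; rw [Matrix.star_apply]; exact Complex.mul_conj _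
    rw [Finset.sum_congr rfl (fun j _ => h2 j)] at h1
    exact_mod_cast h1
  have hcol : ∀ j, ∑ i, p i j = 1 := by
    intro j
    have h1 : (star W * W) j j = 1 := by rw [hW1]; simp
    rw [Matrix.mul_apply] at h1
    have h2 : ∀ i, (star W) j i * W i j = ((p i j : ℝ) : ℂ) := by
      intro i; rw [Matrix.star_apply, mul_comm]; exact Complex.mul_conj _
    rw [Finset.sum_congr rfl (fun i _ => h2 i)] at h1
    exact_mod_cast h1
  have hUρ : star U * ρ = Matrix.diagonal (fun i => (lam i : ℂ)) * star U := by
    calc star U * ρ = (star U * ρ * U) * star U := by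
          rw [mul_assoc (star U * ρ) U (star U), hU2, mul_one]
      _ = _ := by rw [hD]
  have hDW : star U * ρ * V = Matrix.diagonal (fun i => (lam i : ℂ)) * W := by
    rw [mul_assoc, hWdef, ← mul_assoc, hUρ, mul_assoc]
  have hTmat : star V * ρ * V = star W * Matrix.diagonal (fun i => (lam i : ℂ)) * W := by
    have h1 : U * (star U * ρ * V) = ρ * V := by
      rw [← mul_assoc, ← mul_assoc, hU2, one_mul]
    calc star V * ρ * V = star V * (ρ * V) := by rw [mul_assoc]
      _ = star V * (U * (star U * ρ * V)) := by rw [h1]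
      _ = (star V * U) * (star U * ρ * V) := by rw [← mul_assoc]
      _ = star W * (Matrix.diagonal (fun i => (lam i : ℂ)) * W) := by rw [hDW, ← hstarW]
      _ = _ := by rw [← mul_assoc]
  have hT : ∀ j, (star V * ρ * V) j j = ((∑ i, lam i * p i j : ℝ) : ℂ) := by
    intro j
    rw [hTmat, Matrix.mul_apply]
    have h2 : ∀ i, (star W * Matrix.diagonal (fun i => (lam i : ℂ))) j i * W i j
        = ((lam i * p i j : ℝ) : ℂ) := by
      intro i
      rw [Matrix.mul_apply, Finset.sum_eq_single i
        (fun b _ hb => by rw [Matrix.diagonal_apply_ne _ hb, mul_zero])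
        (fun h => absurd (Finset.mem_univ i) h)]
      rw [Matrix.diagonal_apply_eq, Matrix.star_apply]
      rw [show ((lam i * p i j : ℝ) : ℂ) = ↑(lam i) * (W i j * (starRingEnd ℂ) (W i j)) by
        rw [Complex.mul_conj]; push_cast; ring]
      simp only [Complex.star_def]
      ring
    rw [Finset.sum_congr rfl (fun i _ => h2 i)]
    push_cast
    rfl
  set q : n → ℝ := fun i => ∑ j, μ j * p i j with hqdef
  have hq0 : ∀ i, 0 ≤ q i := fun i => Finset.sum_nonneg fun j _ => mul_nonneg (hμ0 j) (hp0 i j)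
  have hqsum : ∑ i, q i = 1 := by
    rw [hqdef]
    rw [Finset.sum_comm]
    calc ∑ j, ∑ i, μ j * p i j = ∑ j, μ j * ∑ i, p i j := by
          refine Finset.sum_congr rfl fun j _ => ?_; rw [Finset.mul_sum]
      _ = ∑ j, μ j := by refine Finset.sum_congr rfl fun j _ => by rw [hcol j, mul_one]
      _ = 1 := hμ1
  have hlam0 : ∀ i, 0 ≤ lam i := fun i => hρ.eigenvalues_nonneg i
  have hlamsum : ∑ i, lam i = 1 := by
    have htrD : ρ.trace = ∑ i, ((lam i : ℂ)) := by
      rw [hspec, Matrix.trace_mul_comm, ← mul_assoc, hU1, one_mul, Matrix.trace_diagonal]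
    have h1 : ((∑ i, lam i : ℝ) : ℂ) = 1 := by push_cast; rw [← htrD, hρt]
    exact_mod_cast h1
  have hcolzero : ∀ j, μ j = 0 → ∀ i, (star U * ρ * V) i j = 0 := by
    intro j hj i
    have h0 : ∀ k, (ρ * V) k j = 0 := by
      intro k
      have h := congrFun (col_mul_eq ρ V j) k
      simp only [hker j hj, Pi.zero_apply] at h
      exact h
    rw [mul_assoc, Matrix.mul_apply]
    exact Finset.sum_eq_zero fun k _ => by rw [h0 k, mul_zero]
  have hlamW : ∀ i j, μ j = 0 → (lam i : ℂ) * W i j = 0 := by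
    intro i j hj
    have h := hcolzero j hj i
    rwa [hDW, Matrix.diagonal_mul] at h
  have hsupp : ∀ i, q i = 0 → lam i = 0 := by
    intro i hqi
    have hterm : ∀ j, μ j * p i j = 0 := by
      have := (Finset.sum_eq_zero_iff_of_nonneg
        (fun j _ => mul_nonneg (hμ0 j) (hp0 i j))).mp hqi
      exact fun j => this j (Finset.mem_univ j)
    have hkey : ∀ j, (star U * ρ * V) i j * (star V * U) j i = 0 := by
      intro j
      rcases mul_eq_zero.mp (hterm j) with h | h
      · rw [hcolzero j h i, zero_mul]
      · have hw : W i j = 0 := Complex.normSq_eq_zero.mp h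
        rw [hDW, Matrix.diagonal_mul, hw, mul_zero, zero_mul]
    have h2 : star U * ρ * V * (star V * U) = star U * ρ * U := by
      rw [← mul_assoc, mul_assoc (star U * ρ) V (star V), hV2, mul_one]
    have h3 : (star U * ρ * V * (star V * U)) i i = 0 := by
      rw [Matrix.mul_apply]; exact Finset.sum_eq_zero fun j _ => hkey j
    rw [h2, hD] at h3
    simp only [Matrix.diagonal_apply_eq] at h3
    exact_mod_cast h3
  -- Gibbs step
  have step1 := gibbs lam q hlam0 hq0 hlamsum hqsum hsupp
  -- Jensen-type step
  have step2 : -∑ i, lam i * Real.log (q i)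
      ≤ -∑ i, lam i * (∑ j, p i j * Real.log (μ j)) := by
    rw [neg_le_neg_iff]
    refine Finset.sum_le_sum fun i _ => ?_
    rcases eq_or_lt_of_le (hlam0 i) with h | h
    · rw [← h]; simp
    · have hqpos : 0 < q i := by
        rcases eq_or_lt_of_le (hq0 i) with h2 | h2
        · exact absurd (hsupp i h2.symm) (by linarith)
        · exact h2
      refine mul_le_mul_of_nonneg_left ?_ (le_of_lt h)
      have hterm : ∀ j, p i j * Real.log (μ j)
          ≤ p i j * (Real.log (q i) + μ j / q i - 1) := by
        intro j
        rcases eq_or_lt_of_le (hμ0 j) with h2 | h2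
        · have hw : W i j = 0 := by
            have := hlamW i j h2.symm
            rcases mul_eq_zero.mp this with h3 | h3
            · exact absurd (by exact_mod_cast h3 : lam i = 0) (by linarith)
            · exact h3
          have hpij : p i j = 0 := by rw [hpdef]; simp [hw]
          simp [hpij]
        · refine mul_le_mul_of_nonneg_left ?_ (hp0 i j)
          have hlog : Real.log (μ j / q i) ≤ μ j / q i - 1 :=
            Real.log_le_sub_one_of_pos (by positivity)
          rw [Real.log_div h2.ne' hqpos.ne'] at hlog
          linarith
      calc ∑ j, p i j * Real.log (μ j)
          ≤ ∑ j, p i j * (Real.log (q i) + μ j / q i - 1) := Finset.sum_le_sum fun j _ => hterm j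
        _ = (∑ j, p i j) * Real.log (q i) + (∑ j, p i j * μ j) / q i - (∑ j, p i j) := by
            rw [Finset.sum_mul, Finset.sum_div, ← Finset.sum_add_distrib,
              ← Finset.sum_sub_distrib]
            refine Finset.sum_congr rfl fun j _ => by ring
        _ = Real.log (q i) := by
            have : ∑ j, p i j * μ j = q i := by
              rw [hqdef]; exact Finset.sum_congr rfl fun j _ => mul_comm _ _
            rw [hrow i, this, one_mul, div_self hqpos.ne']
            ring
  -- rearrangement
  have step3 : ∑ i, lam i * (∑ j, p i j * Real.log (μ j))
      = ∑ j, ((star V * ρ * V) j j).re * Real.log (μ j) := by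
    have hre : ∀ j, ((star V * ρ * V) j j).re = ∑ i, lam i * p i j := by
      intro j; rw [hT j, Complex.ofReal_re]
    calc ∑ i, lam i * ∑ j, p i j * Real.log (μ j)
        = ∑ i, ∑ j, lam i * p i j * Real.log (μ j) := by
          refine Finset.sum_congr rfl fun i _ => ?_
          rw [Finset.mul_sum]
          exact Finset.sum_congr rfl fun j _ => by ring
      _ = ∑ j, ∑ i, lam i * p i j * Real.log (μ j) := Finset.sum_comm
      _ = ∑ j, ((star V * ρ * V) j j).re * Real.log (μ j) := by
          refine Finset.sum_congr rfl fun j _ => ?_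
          rw [hre j, Finset.sum_mul]
  calc -∑ i, lam i * Real.log (lam i) ≤ -∑ i, lam i * Real.log (q i) := step1
    _ ≤ -∑ i, lam i * (∑ j, p i j * Real.log (μ j)) := step2
    _ = -∑ j, ((star V * ρ * V) j j).re * Real.log (μ j) := by rw [step3]



def vkron {A B : Type*} (x : A → ℂ) (y : B → ℂ) : A × B → ℂ := fun p => x p.1 * y p.2

section expand
variable {n m : Type*} [Fintype n] [Fintype m]

lemma dot_expand (N : Matrix n n ℂ) (v w : n → ℂ) :
    star v ⬝ᵥ (N *ᵥ w) = ∑ a, ∑ a', star (v a) * N a a' * w a' := by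
  simp only [dotProduct, Matrix.mulVec, Pi.star_apply, Finset.mul_sum]
  exact Finset.sum_congr rfl fun a _ => Finset.sum_congr rfl fun a' _ => by ring

lemma conj_mul_mul_apply (N : Matrix n n ℂ) (X : Matrix n m ℂ) (i j : m) :
    (Xᴴ * N * X) i j = ∑ a, ∑ a', star (X a i) * N a a' * X a' j := by
  simp only [Matrix.mul_apply, Matrix.conjTranspose_apply, Finset.sum_mul, Finset.mul_sum]
  exact Finset.sum_comm

lemma entry_dot (N : Matrix n n ℂ) (X : Matrix n m ℂ) (i j : m) :
    (Xᴴ * N * X) i j = star (fun r => X r i) ⬝ᵥ (N *ᵥ fun r => X r j) := by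
  rw [conj_mul_mul_apply, dot_expand]

end expand

section sum4
variable {α β γ δ M : Type*} [Fintype α] [Fintype β] [Fintype γ] [Fintype δ] [AddCommMonoid M]

lemma sum4_comm (f : α → β → γ → δ → M) :
    ∑ a, ∑ b, ∑ c, ∑ d, f a b c d = ∑ b, ∑ d, ∑ a, ∑ c, f a b c d := by
  rw [Finset.sum_comm]
  refine Finset.sum_congr rfl fun b _ => ?_
  have h1 : ∀ a : α, ∑ c : γ, ∑ d : δ, f a b c d = ∑ d, ∑ c, f a b c d :=
    fun a => Finset.sum_comm
  rw [Finset.sum_congr rfl fun a _ => h1 a]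
  exact Finset.sum_comm

end sum4

variable {A B : Type*} [Fintype A] [Fintype B] [DecidableEq A] [DecidableEq B]

/-- Inner bilinear block form. -/
def Sfun (ρ : Matrix (A × B) (A × B) ℂ) (x x' : A → ℂ) (b b' : B) : ℂ :=
  ∑ a, ∑ a', star (x a) * ρ (a, b) (a', b') * x' a'

lemma key_expand (ρ : Matrix (A × B) (A × B) ℂ) (v w : A × B → ℂ) :
    star v ⬝ᵥ (ρ *ᵥ w) =
      ∑ a, ∑ c, ∑ a', ∑ c', star (v (a, c)) * ρ (a, c) (a', c') * w (a', c') := by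
  rw [dot_expand]
  rw [Fintype.sum_prod_type]
  refine Finset.sum_congr rfl fun a _ => Finset.sum_congr rfl fun c _ => ?_
  rw [Fintype.sum_prod_type]

lemma emasterB (ρ : Matrix (A × B) (A × B) ℂ) (x x' : A → ℂ) (y y' : B → ℂ) :
    star (vkron x y) ⬝ᵥ (ρ *ᵥ vkron x' y') =
      ∑ c, ∑ c', star (y c) * y' c' * Sfun ρ x x' c c' := by
  rw [key_expand, sum4_comm]
  refine Finset.sum_congr rfl fun c _ => Finset.sum_congr rfl fun c' _ => ?_
  rw [Sfun, Finset.mul_sum]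
  refine Finset.sum_congr rfl fun a _ => ?_
  rw [Finset.mul_sum]
  refine Finset.sum_congr rfl fun a' _ => ?_
  simp only [vkron, star_mul']
  ring

lemma emasterA (ρ : Matrix (A × B) (A × B) ℂ) (x x' : A → ℂ) (y y' : B → ℂ) :
    star (vkron x y) ⬝ᵥ (ρ *ᵥ vkron x' y') =
      ∑ a, ∑ a', star (x a) * x' a' * (∑ c, ∑ c', star (y c) * ρ (a, c) (a', c') * y' c') := by
  rw [key_expand]
  have h1 : ∀ a, ∑ c : B, ∑ a' : A, ∑ c' : B, star (vkron x y (a, c)) * ρ (a, c) (a', c') *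
      vkron x' y' (a', c') = ∑ a', ∑ c, ∑ c', star (vkron x y (a, c)) * ρ (a, c) (a', c') *
      vkron x' y' (a', c') := fun a => Finset.sum_comm
  rw [Finset.sum_congr rfl fun a _ => h1 a]
  refine Finset.sum_congr rfl fun a _ => Finset.sum_congr rfl fun a' _ => ?_
  rw [Finset.mul_sum]
  refine Finset.sum_congr rfl fun c _ => ?_
  rw [Finset.mul_sum]
  refine Finset.sum_congr rfl fun c' _ => ?_
  simp only [vkron, star_mul']
  ring

lemma sum3_comm {α β γ M : Type*} [Fintype α] [Fintype β] [Fintype γ] [AddCommMonoid M]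
    (f : α → β → γ → M) :
    ∑ a, ∑ b, ∑ c, f a b c = ∑ c, ∑ a, ∑ b, f a b c := by
  have h1 : ∀ a : α, ∑ b : β, ∑ c : γ, f a b c = ∑ c, ∑ b, f a b c := fun a => Finset.sum_comm
  rw [Finset.sum_congr rfl fun a _ => h1 a]
  exact Finset.sum_comm

lemma e1B (ρ : Matrix (A × B) (A × B) ℂ) (x : A → ℂ) :
    star x ⬝ᵥ (ptraceB ρ *ᵥ x) = ∑ c, Sfun ρ x x c c := by
  rw [dot_expand]
  have h1 : ∀ a a', star (x a) * ptraceB ρ a a' * x a'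
      = ∑ c, star (x a) * ρ (a, c) (a', c) * x a' := by
    intro a a'
    simp only [ptraceB, Matrix.of_apply, Finset.sum_mul, Finset.mul_sum]
  rw [Finset.sum_congr rfl fun a _ => Finset.sum_congr rfl fun a' _ => h1 a a']
  rw [sum3_comm]
  rfl

lemma e1A (ρ : Matrix (A × B) (A × B) ℂ) (y : B → ℂ) :
    star y ⬝ᵥ (ptraceA ρ *ᵥ y) =
      ∑ a, ∑ c, ∑ c', star (y c) * ρ (a, c) (a, c') * y c' := by
  rw [dot_expand]
  have h1 : ∀ c c', star (y c) * ptraceA ρ c c' * y c'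
      = ∑ a, star (y c) * ρ (a, c) (a, c') * y c' := by
    intro c c'
    simp only [ptraceA, Matrix.of_apply, Finset.sum_mul, Finset.mul_sum]
  rw [Finset.sum_congr rfl fun c _ => Finset.sum_congr rfl fun c' _ => h1 c c']
  rw [sum3_comm]


open Kronecker

lemma single_collapse {C : Type*} [Fintype C] [DecidableEq C] (S : C → C → ℂ) (b b' : C) :
    ∑ c, ∑ c', star ((Pi.single b 1 : C → ℂ) c) * (Pi.single b' 1 : C → ℂ) c' * S c c' = S b b' := by
  have h1 : ∀ c c', star ((Pi.single b 1 : C → ℂ) c) * (Pi.single b' 1 : C → ℂ) c' * S c c'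
      = if c = b then (if c' = b' then S c c' else 0) else 0 := by
    intro c c'
    simp only [Pi.single_apply]
    split_ifs <;> simp
  rw [Finset.sum_congr rfl fun c _ => Finset.sum_congr rfl fun c' _ => h1 c c']
  have h2 : ∀ c, (∑ c', if c = b then (if c' = b' then S c c' else 0) else 0)
      = if c = b then S c b' else 0 := by
    intro c
    by_cases hc : c = b
    · simp only [hc, if_true]
      rw [Finset.sum_ite_eq' Finset.univ b']
      simp
    · simp [hc]
  rw [Finset.sum_congr rfl fun c _ => h2 c, Finset.sum_ite_eq' Finset.univ b]
  simp

lemma trace_eq_sum_eigenvalues {n : Type*} [Fintype n] [DecidableEq n]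
    {M : Matrix n n ℂ} (hM : M.IsHermitian) :
    M.trace = ∑ i, (hM.eigenvalues i : ℂ) := by
  have hU1 : star (hM.eigenvectorUnitary : Matrix n n ℂ) * (hM.eigenvectorUnitary : Matrix n n ℂ) = 1 :=
    Unitary.coe_star_mul_self hM.eigenvectorUnitary
  have hspec : M = (hM.eigenvectorUnitary : Matrix n n ℂ) *
      Matrix.diagonal (fun i => (hM.eigenvalues i : ℂ)) * star (hM.eigenvectorUnitary : Matrix n n ℂ) := by
    simpa [Function.comp_def] using hM.spectral_theorem
  conv_lhs => rw [hspec]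
  rw [Matrix.trace_mul_comm, ← mul_assoc, hU1, one_mul, Matrix.trace_diagonal]

lemma psd_trace_zero {n : Type*} [Fintype n] [DecidableEq n]
    {M : Matrix n n ℂ} (hM : M.PosSemidef) (ht : M.trace = 0) : M = 0 := by
  have h1 : ∑ i, hM.1.eigenvalues i = 0 := by
    have h0 := trace_eq_sum_eigenvalues hM.1
    rw [ht] at h0
    have h2 : ((∑ i, hM.1.eigenvalues i : ℝ) : ℂ) = 0 := by push_cast; rw [← h0]
    exact_mod_cast h2
  have h2 : ∀ i, hM.1.eigenvalues i = 0 := fun i =>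
    (Finset.sum_eq_zero_iff_of_nonneg (fun i _ => hM.eigenvalues_nonneg i)).mp h1 i
      (Finset.mem_univ i)
  have hspec : M = (hM.1.eigenvectorUnitary : Matrix n n ℂ) *
      Matrix.diagonal (fun i => (hM.1.eigenvalues i : ℂ)) * star (hM.1.eigenvectorUnitary : Matrix n n ℂ) := by
    simpa [Function.comp_def] using hM.1.spectral_theorem
  rw [hspec]
  have hz : Matrix.diagonal (fun i => (hM.1.eigenvalues i : ℂ)) = 0 := by
    ext i j; by_cases h : i = j
    · subst h; simp [h2 i]
    · simp [Matrix.diagonal_apply_ne _ h]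
  rw [hz, mul_zero, zero_mul]

lemma ptraceB_isHermitian {ρ : Matrix (A × B) (A × B) ℂ} (hρ : ρ.IsHermitian) :
    (ptraceB ρ).IsHermitian := by
  refine Matrix.IsHermitian.ext fun i j => ?_
  simp only [ptraceB, Matrix.of_apply, star_sum]
  exact Finset.sum_congr rfl fun b _ => hρ.apply _ _

lemma ptraceA_isHermitian {ρ : Matrix (A × B) (A × B) ℂ} (hρ : ρ.IsHermitian) :
    (ptraceA ρ).IsHermitian := by
  refine Matrix.IsHermitian.ext fun i j => ?_
  simp only [ptraceA, Matrix.of_apply, star_sum]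
  exact Finset.sum_congr rfl fun b _ => hρ.apply _ _

lemma ptraceB_trace (ρ : Matrix (A × B) (A × B) ℂ) : (ptraceB ρ).trace = ρ.trace := by
  simp only [Matrix.trace, Matrix.diag, ptraceB, Matrix.of_apply, Fintype.sum_prod_type]

lemma ptraceA_trace (ρ : Matrix (A × B) (A × B) ℂ) : (ptraceA ρ).trace = ρ.trace := by
  simp only [Matrix.trace, Matrix.diag, ptraceA, Matrix.of_apply, Fintype.sum_prod_type]
  exact Finset.sum_comm

lemma sfun_as_quad (ρ : Matrix (A × B) (A × B) ℂ) (x : A → ℂ) (c : B) :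
    Sfun ρ x x c c = star (vkron x (Pi.single c 1)) ⬝ᵥ (ρ *ᵥ vkron x (Pi.single c 1)) := by
  rw [emasterB, single_collapse]

lemma ptraceB_posSemidef_s10 {ρ : Matrix (A × B) (A × B) ℂ} (hρ : ρ.PosSemidef) :
    (ptraceB ρ).PosSemidef := by
  refine Matrix.PosSemidef.of_dotProduct_mulVec_nonneg (ptraceB_isHermitian hρ.1) fun x => ?_
  rw [e1B]
  refine Finset.sum_nonneg fun c _ => ?_
  rw [sfun_as_quad]
  exact hρ.dotProduct_mulVec_nonneg _

lemma afun_as_quad (ρ : Matrix (A × B) (A × B) ℂ) (y : B → ℂ) (a : A) :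
    (∑ c, ∑ c', star (y c) * ρ (a, c) (a, c') * y c')
      = star (vkron (Pi.single a 1) y) ⬝ᵥ (ρ *ᵥ vkron (Pi.single a 1) y) := by
  rw [emasterA, single_collapse (fun u u' => ∑ c, ∑ c', star (y c) * ρ (u, c) (u', c') * y c')]

lemma ptraceA_posSemidef {ρ : Matrix (A × B) (A × B) ℂ} (hρ : ρ.PosSemidef) :
    (ptraceA ρ).PosSemidef := by
  refine Matrix.PosSemidef.of_dotProduct_mulVec_nonneg (ptraceA_isHermitian hρ.1) fun y => ?_
  rw [e1A]
  refine Finset.sum_nonneg fun a _ => ?_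
  rw [afun_as_quad]
  exact hρ.dotProduct_mulVec_nonneg _

lemma kernelB {ρ : Matrix (A × B) (A × B) ℂ} (hρ : ρ.PosSemidef) (u : A → ℂ)
    (h : star u ⬝ᵥ (ptraceB ρ *ᵥ u) = 0) (w : B → ℂ) : ρ *ᵥ vkron u w = 0 := by
  set X : Matrix (A × B) B ℂ := Matrix.of fun p c => vkron u (Pi.single c 1) p with hX
  have hcol : ∀ c : B, (fun r => X r c) = vkron u (Pi.single c 1) := fun c => rfl
  set M := Xᴴ * ρ * X with hM
  have hMpsd : M.PosSemidef := hρ.conjTranspose_mul_mul_same X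
  have hMentry : ∀ b b', M b b' = Sfun ρ u u b b' := by
    intro b b'
    rw [hM, entry_dot, hcol, hcol, emasterB, single_collapse]
  have htr : M.trace = 0 := by
    have : M.trace = ∑ b, Sfun ρ u u b b := Finset.sum_congr rfl fun b _ => hMentry b b
    rw [this, ← e1B, h]
  have hM0 : M = 0 := psd_trace_zero hMpsd htr
  have hq : star (vkron u w) ⬝ᵥ (ρ *ᵥ vkron u w) = 0 := by
    rw [emasterB]
    have hz : ∀ c c', Sfun ρ u u c c' = 0 := by
      intro c c'
      rw [← hMentry, hM0]
      simp
    simp only [hz, mul_zero]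
    simp
  exact (hρ.dotProduct_mulVec_zero_iff _).mp hq

lemma kernelA {ρ : Matrix (A × B) (A × B) ℂ} (hρ : ρ.PosSemidef) (w : B → ℂ)
    (h : star w ⬝ᵥ (ptraceA ρ *ᵥ w) = 0) (u : A → ℂ) : ρ *ᵥ vkron u w = 0 := by
  set X : Matrix (A × B) A ℂ := Matrix.of fun p a => vkron (Pi.single a 1) w p with hX
  have hcol : ∀ a : A, (fun r => X r a) = vkron (Pi.single a 1) w := fun a => rfl
  set M := Xᴴ * ρ * X with hM
  have hMpsd : M.PosSemidef := hρ.conjTranspose_mul_mul_same X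
  have hMentry : ∀ a a', M a a' =
      ∑ c, ∑ c', star (w c) * ρ (a, c) (a', c') * w c' := by
    intro a a'
    rw [hM, entry_dot, hcol, hcol, emasterA,
      single_collapse (fun u₁ u₂ => ∑ c, ∑ c', star (w c) * ρ (u₁, c) (u₂, c') * w c')]
  have htr : M.trace = 0 := by
    have : M.trace = ∑ a, ∑ c, ∑ c', star (w c) * ρ (a, c) (a, c') * w c' :=
      Finset.sum_congr rfl fun a _ => hMentry a a
    rw [this, ← e1A, h]
  have hM0 : M = 0 := psd_trace_zero hMpsd htr
  have hq : star (vkron u w) ⬝ᵥ (ρ *ᵥ vkron u w) = 0 := by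
    rw [emasterA]
    have hz : ∀ a a', (∑ c, ∑ c', star (w c) * ρ (a, c) (a', c') * w c') = 0 := by
      intro a a'
      rw [← hMentry, hM0]
      simp
    simp only [hz, mul_zero]
    simp
  exact (hρ.dotProduct_mulVec_zero_iff _).mp hq

lemma star_kron (M : Matrix A A ℂ) (N : Matrix B B ℂ) :
    star (M ⊗ₖ N) = star M ⊗ₖ star N := by
  ext p q
  cases p with | mk a b => cases q with | mk c d =>
  simp only [Matrix.star_apply, Matrix.kroneckerMap_apply, star_mul']
  try ring

lemma col_kron (M : Matrix A A ℂ) (N : Matrix B B ℂ) (a : A) (b : B) :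
    (fun r => (M ⊗ₖ N) r (a, b)) = vkron (fun i => M i a) (fun c => N c b) := by
  funext r
  cases r with | mk i c => rfl

lemma ptraceB_conj_kron (ρ : Matrix (A × B) (A × B) ℂ) (MA : Matrix A A ℂ)
    (MB : Matrix B B ℂ) (hMB : MB * star MB = 1) :
    ptraceB (star (MA ⊗ₖ MB) * ρ * (MA ⊗ₖ MB)) = star MA * ptraceB ρ * MA := by
  ext i j
  have hentry : ∀ b : B, (star (MA ⊗ₖ MB) * ρ * (MA ⊗ₖ MB)) (i, b) (j, b)
      = ∑ c, ∑ c', star (MB c b) * MB c' b * Sfun ρ (fun r => MA r i) (fun r => MA r j) c c' := by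
    intro b
    rw [Matrix.star_eq_conjTranspose, entry_dot, col_kron, col_kron, emasterB]
  show ∑ b, (star (MA ⊗ₖ MB) * ρ * (MA ⊗ₖ MB)) (i, b) (j, b) = _
  rw [Finset.sum_congr rfl fun b _ => hentry b]
  rw [(sum3_comm fun b c c' => star (MB c b) * MB c' b *
      Sfun ρ (fun r => MA r i) (fun r => MA r j) c c').trans
    (sum3_comm fun c' b c => star (MB c b) * MB c' b *
      Sfun ρ (fun r => MA r i) (fun r => MA r j) c c')]
  have hcollapse : ∀ c c', ∑ b, star (MB c b) * MB c' b *
      Sfun ρ (fun r => MA r i) (fun r => MA r j) c c'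
      = (if c' = c then 1 else 0) * Sfun ρ (fun r => MA r i) (fun r => MA r j) c c' := by
    intro c c'
    rw [← Finset.sum_mul]
    congr 1
    have : ∑ b, star (MB c b) * MB c' b = (MB * star MB) c' c := by
      rw [Matrix.mul_apply]
      exact Finset.sum_congr rfl fun b _ => by rw [Matrix.star_apply]; ring
    rw [this, hMB, Matrix.one_apply]
  rw [Finset.sum_congr rfl fun c _ => Finset.sum_congr rfl fun c' _ => hcollapse c c']
  have hc2 : ∀ c : B, ∑ c', (if c' = c then (1:ℂ) else 0) *
      Sfun ρ (fun r => MA r i) (fun r => MA r j) c c'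
      = Sfun ρ (fun r => MA r i) (fun r => MA r j) c c := by
    intro c
    simp only [ite_mul, one_mul, zero_mul]
    rw [Finset.sum_ite_eq' Finset.univ c]
    simp
  rw [Finset.sum_congr rfl fun c _ => hc2 c]
  rw [Matrix.star_eq_conjTranspose, conj_mul_mul_apply]
  have : ∀ a a', star (MA a i) * ptraceB ρ a a' * MA a' j
      = ∑ c, star (MA a i) * ρ (a, c) (a', c) * MA a' j := by
    intro a a'
    simp only [ptraceB, Matrix.of_apply, Finset.sum_mul, Finset.mul_sum]
  rw [Finset.sum_congr rfl fun a _ => Finset.sum_congr rfl fun a' _ => this a a']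
  exact (sum3_comm fun a a' c => star (MA a i) * ρ (a, c) (a', c) * MA a' j).symm

lemma ptraceA_conj_kron (ρ : Matrix (A × B) (A × B) ℂ) (MA : Matrix A A ℂ)
    (MB : Matrix B B ℂ) (hMA : MA * star MA = 1) :
    ptraceA (star (MA ⊗ₖ MB) * ρ * (MA ⊗ₖ MB)) = star MB * ptraceA ρ * MB := by
  ext i j
  have hentry : ∀ a : A, (star (MA ⊗ₖ MB) * ρ * (MA ⊗ₖ MB)) (a, i) (a, j)
      = ∑ c, ∑ c', star (MA c a) * MA c' a *
        (∑ b, ∑ b', star (MB b i) * ρ (c, b) (c', b') * MB b' j) := by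
    intro a
    rw [Matrix.star_eq_conjTranspose, entry_dot, col_kron, col_kron, emasterA]
  show ∑ a, (star (MA ⊗ₖ MB) * ρ * (MA ⊗ₖ MB)) (a, i) (a, j) = _
  rw [Finset.sum_congr rfl fun a _ => hentry a]
  rw [(sum3_comm fun a c c' => star (MA c a) * MA c' a *
      (∑ b, ∑ b', star (MB b i) * ρ (c, b) (c', b') * MB b' j)).trans
    (sum3_comm fun c' a c => star (MA c a) * MA c' a *
      (∑ b, ∑ b', star (MB b i) * ρ (c, b) (c', b') * MB b' j))]
  have hcollapse : ∀ c c', ∑ a, star (MA c a) * MA c' a *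
      (∑ b, ∑ b', star (MB b i) * ρ (c, b) (c', b') * MB b' j)
      = (if c' = c then 1 else 0) * (∑ b, ∑ b', star (MB b i) * ρ (c, b) (c', b') * MB b' j) := by
    intro c c'
    rw [← Finset.sum_mul]
    congr 1
    have : ∑ a, star (MA c a) * MA c' a = (MA * star MA) c' c := by
      rw [Matrix.mul_apply]
      exact Finset.sum_congr rfl fun a _ => by rw [Matrix.star_apply]; ring
    rw [this, hMA, Matrix.one_apply]
  rw [Finset.sum_congr rfl fun c _ => Finset.sum_congr rfl fun c' _ => hcollapse c c']
  have hc2 : ∀ c : A, ∑ c', (if c' = c then (1:ℂ) else 0) *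
      (∑ b, ∑ b', star (MB b i) * ρ (c, b) (c', b') * MB b' j)
      = ∑ b, ∑ b', star (MB b i) * ρ (c, b) (c, b') * MB b' j := by
    intro c
    simp only [ite_mul, one_mul, zero_mul]
    rw [Finset.sum_ite_eq' Finset.univ c]
    simp
  rw [Finset.sum_congr rfl fun c _ => hc2 c]
  rw [Matrix.star_eq_conjTranspose, conj_mul_mul_apply]
  have : ∀ b b', star (MB b i) * ptraceA ρ b b' * MB b' j
      = ∑ c, star (MB b i) * ρ (c, b) (c, b') * MB b' j := by
    intro b b'
    simp only [ptraceA, Matrix.of_apply, Finset.sum_mul, Finset.mul_sum]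
  rw [Finset.sum_congr rfl fun b _ => Finset.sum_congr rfl fun b' _ => this b b']
  exact (sum3_comm fun b b' c => star (MB b i) * ρ (c, b) (c, b') * MB b' j).symm



theorem subadd {A B : Type*} [Fintype A] [Fintype B] [DecidableEq A] [DecidableEq B]
    {ρ : Matrix (A × B) (A × B) ℂ} (hρ : ρ.PosSemidef) (ht : ρ.trace = 1) :
    -∑ i, hρ.1.eigenvalues i * Real.log (hρ.1.eigenvalues i) ≤
      (-∑ a, (ptraceB_posSemidef_s10 hρ).1.eigenvalues a *
          Real.log ((ptraceB_posSemidef_s10 hρ).1.eigenvalues a)) +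
      (-∑ b, (ptraceA_posSemidef hρ).1.eigenvalues b *
          Real.log ((ptraceA_posSemidef hρ).1.eigenvalues b)) := by
  set hA := ptraceB_posSemidef_s10 hρ with hAdef
  set hB := ptraceA_posSemidef hρ with hBdef
  set α := hA.1.eigenvalues with hαdef
  set β := hB.1.eigenvalues with hβdef
  set MA := (hA.1.eigenvectorUnitary : Matrix A A ℂ) with hMAdef
  set MB := (hB.1.eigenvectorUnitary : Matrix B B ℂ) with hMBdef
  have hMA1 : star MA * MA = 1 := Unitary.coe_star_mul_self hA.1.eigenvectorUnitary
  have hMA2 : MA * star MA = 1 := Unitary.coe_mul_star_self hA.1.eigenvectorUnitary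
  have hMB1 : star MB * MB = 1 := Unitary.coe_star_mul_self hB.1.eigenvectorUnitary
  have hMB2 : MB * star MB = 1 := Unitary.coe_mul_star_self hB.1.eigenvectorUnitary
  have hDA : star MA * ptraceB ρ * MA = Matrix.diagonal (fun a => (α a : ℂ)) := by
    simpa [Function.comp_def, Unitary.conjStarAlgAut_star_apply] using hA.1.conjStarAlgAut_star_eigenvectorUnitary
  have hDB : star MB * ptraceA ρ * MB = Matrix.diagonal (fun b => (β b : ℂ)) := by
    simpa [Function.comp_def, Unitary.conjStarAlgAut_star_apply] using hB.1.conjStarAlgAut_star_eigenvectorUnitary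
  have hspecA : ptraceB ρ = MA * Matrix.diagonal (fun a => (α a : ℂ)) * star MA := by
    simpa [Function.comp_def] using hA.1.spectral_theorem
  have hspecB : ptraceA ρ = MB * Matrix.diagonal (fun b => (β b : ℂ)) * star MB := by
    simpa [Function.comp_def] using hB.1.spectral_theorem
  set V := MA ⊗ₖ MB with hVdef
  have hstarV : star V = star MA ⊗ₖ star MB := star_kron MA MB
  have hV1 : star V * V = 1 := by
    rw [hstarV, hVdef, ← Matrix.mul_kronecker_mul, hMA1, hMB1, Matrix.one_kronecker_one]
  have hV2 : V * star V = 1 := by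
    rw [hstarV, hVdef, ← Matrix.mul_kronecker_mul, hMA2, hMB2, Matrix.one_kronecker_one]
  set μ : A × B → ℝ := fun j => α j.1 * β j.2 with hμdef
  have hα0 : ∀ a, 0 ≤ α a := fun a => hA.eigenvalues_nonneg a
  have hβ0 : ∀ b, 0 ≤ β b := fun b => hB.eigenvalues_nonneg b
  have hμ0 : ∀ j, 0 ≤ μ j := fun j => mul_nonneg (hα0 _) (hβ0 _)
  have hαsum : ∑ a, α a = 1 := by
    have h1 : (ptraceB ρ).trace = 1 := by rw [ptraceB_trace, ht]
    have h2 := trace_eq_sum_eigenvalues hA.1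
    rw [h1] at h2
    have h3 : ((∑ a, α a : ℝ) : ℂ) = 1 := by push_cast; rw [← h2]
    exact_mod_cast h3
  have hβsum : ∑ b, β b = 1 := by
    have h1 : (ptraceA ρ).trace = 1 := by rw [ptraceA_trace, ht]
    have h2 := trace_eq_sum_eigenvalues hB.1
    rw [h1] at h2
    have h3 : ((∑ b, β b : ℝ) : ℂ) = 1 := by push_cast; rw [← h2]
    exact_mod_cast h3
  have hμ1 : ∑ j, μ j = 1 := by
    rw [hμdef, Fintype.sum_prod_type]
    calc ∑ a, ∑ b, α a * β b = ∑ a, α a * ∑ b, β b :=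
          Finset.sum_congr rfl fun a _ => (Finset.mul_sum _ _ _).symm
      _ = 1 := by rw [hβsum]; simp [hαsum]
  have hcolMA : ∀ a, α a = 0 → ptraceB ρ *ᵥ (fun i => MA i a) = 0 := by
    intro a ha
    have h1 : ptraceB ρ * MA = MA * Matrix.diagonal (fun a => (α a : ℂ)) := by
      rw [hspecA, mul_assoc (MA * Matrix.diagonal (fun a => (α a : ℂ))) (star MA) MA,
        hMA1, mul_one]
    rw [← col_mul_eq, h1]
    funext k
    rw [Matrix.mul_apply, Finset.sum_eq_single a
      (fun b _ hb => by rw [Matrix.diagonal_apply_ne _ hb, mul_zero])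
      (fun h => absurd (Finset.mem_univ a) h)]
    simp [ha]
  have hcolMB : ∀ b, β b = 0 → ptraceA ρ *ᵥ (fun i => MB i b) = 0 := by
    intro b hb
    have h1 : ptraceA ρ * MB = MB * Matrix.diagonal (fun b => (β b : ℂ)) := by
      rw [hspecB, mul_assoc (MB * Matrix.diagonal (fun b => (β b : ℂ))) (star MB) MB,
        hMB1, mul_one]
    rw [← col_mul_eq, h1]
    funext k
    rw [Matrix.mul_apply, Finset.sum_eq_single b
      (fun c _ hc => by rw [Matrix.diagonal_apply_ne _ hc, mul_zero])
      (fun h => absurd (Finset.mem_univ b) h)]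
    simp [hb]
  have hker : ∀ j, μ j = 0 → ρ *ᵥ (fun k => V k j) = 0 := by
    intro j hj
    obtain ⟨a, b⟩ := j
    have hcol : (fun k => V k (a, b)) = vkron (fun i => MA i a) (fun c => MB c b) :=
      col_kron MA MB a b
    rw [hcol]
    rcases mul_eq_zero.mp hj with h | h
    · exact kernelB hρ _ (by rw [hcolMA a h, dotProduct_zero]) _
    · exact kernelA hρ _ (by rw [hcolMB b h, dotProduct_zero]) _
  have hklein := klein hρ ht hV1 hV2 hμ0 hμ1 hker
  set T := star V * ρ * V with hTdef
  have hTB : ptraceB T = Matrix.diagonal (fun a => (α a : ℂ)) := by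
    rw [hTdef, hVdef, ptraceB_conj_kron ρ MA MB hMB2, hDA]
  have hTA : ptraceA T = Matrix.diagonal (fun b => (β b : ℂ)) := by
    rw [hTdef, hVdef, ptraceA_conj_kron ρ MA MB hMA2, hDB]
  have hmargA : ∀ a, ∑ b, (T (a, b) (a, b)).re = α a := by
    intro a
    have h1 : ∑ b, T (a, b) (a, b) = (α a : ℂ) := by
      calc ∑ b, T (a, b) (a, b) = ptraceB T a a := rfl
        _ = (α a : ℂ) := by rw [hTB]; simp
    calc ∑ b, (T (a, b) (a, b)).re = (∑ b, T (a, b) (a, b)).re := (Complex.re_sum _ _).symm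
      _ = α a := by rw [h1, Complex.ofReal_re]
  have hmargB : ∀ b, ∑ a, (T (a, b) (a, b)).re = β b := by
    intro b
    have h1 : ∑ a, T (a, b) (a, b) = (β b : ℂ) := by
      calc ∑ a, T (a, b) (a, b) = ptraceA T b b := rfl
        _ = (β b : ℂ) := by rw [hTA]; simp
    calc ∑ a, (T (a, b) (a, b)).re = (∑ a, T (a, b) (a, b)).re := (Complex.re_sum _ _).symm
      _ = β b := by rw [h1, Complex.ofReal_re]
  have hr0 : ∀ j, μ j = 0 → (T j j).re = 0 := by
    intro j hj
    have h1 : T j j = 0 := by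
      rw [hTdef, Matrix.star_eq_conjTranspose, entry_dot, hker j hj, dotProduct_zero]
    rw [h1, Complex.zero_re]
  refine le_trans hklein ?_
  have hsplit : ∀ j : A × B, (T j j).re * Real.log (μ j)
      = (T j j).re * Real.log (α j.1) + (T j j).re * Real.log (β j.2) := by
    intro j
    by_cases h : μ j = 0
    · rw [hr0 j h, zero_mul, zero_mul, zero_mul, add_zero]
    · rw [show Real.log (μ j) = Real.log (α j.1) + Real.log (β j.2) from by
        rw [hμdef]; exact Real.log_mul (mul_ne_zero_iff.mp h).1 (mul_ne_zero_iff.mp h).2]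
      ring
  rw [Finset.sum_congr rfl fun j _ => hsplit j, Finset.sum_add_distrib, neg_add]
  have hA' : ∑ j : A × B, (T j j).re * Real.log (α j.1) = ∑ a, α a * Real.log (α a) := by
    rw [Fintype.sum_prod_type]
    refine Finset.sum_congr rfl fun a _ => ?_
    show ∑ b, (T (a, b) (a, b)).re * Real.log (α a) = _
    rw [← Finset.sum_mul, hmargA a]
  have hB' : ∑ j : A × B, (T j j).re * Real.log (β j.2) = ∑ b, β b * Real.log (β b) := by
    rw [Fintype.sum_prod_type, Finset.sum_comm]
    refine Finset.sum_congr rfl fun b _ => ?_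
    show ∑ a, (T (a, b) (a, b)).re * Real.log (β b) = _
    rw [← Finset.sum_mul, hmargB b]
  rw [hA', hB']


/-- Von Neumann entropy with natural log. -/
def Sr {n : Type*} [Fintype n] [DecidableEq n] (M : Matrix n n ℂ) : ℝ :=
  if h : M.IsHermitian then -∑ i, h.eigenvalues i * Real.log (h.eigenvalues i) else 0

lemma Sr_herm {n : Type*} [Fintype n] [DecidableEq n] {M : Matrix n n ℂ} (h : M.IsHermitian) :
    Sr M = -∑ i, h.eigenvalues i * Real.log (h.eigenvalues i) := dif_pos h

lemma vnEntropy_eq_Sr {n : Type*} [Fintype n] [DecidableEq n] (M : Matrix n n ℂ) :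
    vnEntropy M = Sr M / Real.log 2 := by
  unfold vnEntropy Sr
  by_cases h : M.IsHermitian
  · rw [dif_pos h, dif_pos h]
    have h1 : ∀ i, h.eigenvalues i * Real.logb 2 (h.eigenvalues i)
        = h.eigenvalues i * Real.log (h.eigenvalues i) / Real.log 2 := by
      intro i; rw [Real.logb]; ring
    rw [Finset.sum_congr rfl fun i _ => h1 i, ← Finset.sum_div, neg_div]
  · rw [dif_neg h, dif_neg h, zero_div]

lemma submatrix_posSemidef {n m : Type*} [Fintype n] [DecidableEq n] [Fintype m] [DecidableEq m]
    {M : Matrix n n ℂ} (hM : M.PosSemidef) (e : m ≃ n) : (M.submatrix e e).PosSemidef := by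
  refine Matrix.PosSemidef.of_dotProduct_mulVec_nonneg (hM.1.submatrix e) fun x => ?_
  have h1 : star x ⬝ᵥ (M.submatrix e e *ᵥ x) = star (fun j => x (e.symm j)) ⬝ᵥ (M *ᵥ fun j => x (e.symm j)) := by
    rw [dot_expand, dot_expand]
    rw [← Equiv.sum_comp e (fun a => ∑ a', star (x (e.symm a)) * M a a' * x (e.symm a'))]
    refine Finset.sum_congr rfl fun a _ => ?_
    rw [← Equiv.sum_comp e (fun a' => star (x (e.symm (e a))) * M (e a) a' * x (e.symm a'))]
    simp [Matrix.submatrix_apply]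
  rw [h1]
  exact hM.dotProduct_mulVec_nonneg _

lemma submatrix_trace {n m : Type*} [Fintype n] [Fintype m]
    (M : Matrix n n ℂ) (e : m ≃ n) : (M.submatrix e e).trace = M.trace := by
  simp only [Matrix.trace, Matrix.diag, Matrix.submatrix_apply]
  exact Equiv.sum_comp e (fun j => M j j)

lemma submatrix_diagonal {n m : Type*} [Fintype n] [DecidableEq n] [Fintype m] [DecidableEq m]
    (d : n → ℂ) (e : m ≃ n) :
    (Matrix.diagonal d).submatrix e e = Matrix.diagonal (fun i => d (e i)) := by
  ext i j
  by_cases h : i = j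
  · subst h; simp
  · rw [Matrix.submatrix_apply, Matrix.diagonal_apply_ne _ (fun hc => h (e.injective hc)),
      Matrix.diagonal_apply_ne _ h]

lemma submatrix_star {n m : Type*} [Fintype n] [Fintype m]
    (M : Matrix n n ℂ) (e : m ≃ n) : star (M.submatrix e e) = (star M).submatrix e e := by
  ext i j
  simp [Matrix.submatrix_apply, Matrix.star_apply]

lemma Sr_submatrix {n m : Type*} [Fintype n] [DecidableEq n] [Fintype m] [DecidableEq m]
    {M : Matrix n n ℂ} (hM : M.IsHermitian) (e : m ≃ n) : Sr (M.submatrix e e) = Sr M := by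
  set U := (hM.eigenvectorUnitary : Matrix n n ℂ) with hUdef
  have hU1 : star U * U = 1 := Unitary.coe_star_mul_self hM.eigenvectorUnitary
  have hU2 : U * star U = 1 := Unitary.coe_mul_star_self hM.eigenvectorUnitary
  have hspec : M = U * Matrix.diagonal (fun i => (hM.eigenvalues i : ℂ)) * star U := by
    simpa [Function.comp_def] using hM.spectral_theorem
  set U' := U.submatrix e e with hU'def
  have hU'1 : star U' * U' = 1 := by
    rw [hU'def, submatrix_star, Matrix.submatrix_mul_equiv, hU1, Matrix.submatrix_one_equiv]
  have hU'2 : U' * star U' = 1 := by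
    rw [hU'def, submatrix_star, Matrix.submatrix_mul_equiv, hU2, Matrix.submatrix_one_equiv]
  have hspec' : M.submatrix e e = U' * Matrix.diagonal (fun i => ((hM.eigenvalues (e i) : ℝ) : ℂ)) * star U' := by
    rw [hU'def, submatrix_star]
    calc M.submatrix e e
        = ((U * Matrix.diagonal (fun i => (hM.eigenvalues i : ℂ)) * star U)).submatrix e e := by
          conv_lhs => rw [hspec]
      _ = (U.submatrix e e * (Matrix.diagonal (fun i => (hM.eigenvalues i : ℂ))).submatrix e e) *
            (star U).submatrix e e := by
            rw [Matrix.submatrix_mul_equiv, Matrix.submatrix_mul_equiv]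
      _ = U.submatrix e e * Matrix.diagonal (fun i => ((hM.eigenvalues (e i) : ℝ) : ℂ)) *
            (star U).submatrix e e := by rw [submatrix_diagonal]
  have hsub : (M.submatrix e e).IsHermitian := hM.submatrix e
  rw [Sr_herm hsub, Sr_herm hM]
  have h1 := sum_g_eigenvalues hsub hU'1 hU'2 hspec' (fun x => x * Real.log x)
  rw [h1, Equiv.sum_comp e (fun i => hM.eigenvalues i * Real.log (hM.eigenvalues i))]

lemma vnEntropy_submatrix {n m : Type*} [Fintype n] [DecidableEq n] [Fintype m] [DecidableEq m]
    {M : Matrix n n ℂ} (hM : M.IsHermitian) (e : m ≃ n) :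
    vnEntropy (M.submatrix e e) = vnEntropy M := by
  rw [vnEntropy_eq_Sr, vnEntropy_eq_Sr, Sr_submatrix hM e]

lemma eigenvalues_sum_one {n : Type*} [Fintype n] [DecidableEq n] {M : Matrix n n ℂ}
    (hM : M.IsHermitian) (ht : M.trace = 1) : ∑ i, hM.eigenvalues i = 1 := by
  have h2 := trace_eq_sum_eigenvalues hM
  rw [ht] at h2
  have h3 : ((∑ i, hM.eigenvalues i : ℝ) : ℂ) = 1 := by push_cast; rw [← h2]
  exact_mod_cast h3

lemma Sr_le_log_card {n : Type*} [Fintype n] [DecidableEq n] {M : Matrix n n ℂ}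
    (hM : M.PosSemidef) (ht : M.trace = 1) : Sr M ≤ Real.log (Fintype.card n) := by
  have hsum : ∑ i, hM.1.eigenvalues i = 1 := eigenvalues_sum_one hM.1 ht
  have hcard : 0 < Fintype.card n := by
    rcases Nat.eq_zero_or_pos (Fintype.card n) with h | h
    · exfalso
      have : IsEmpty n := Fintype.card_eq_zero_iff.mp h
      rw [Finset.univ_eq_empty, Finset.sum_empty] at hsum
      norm_num at hsum
    · exact h
  have hq : (0:ℝ) < (Fintype.card n : ℝ) := by exact_mod_cast hcard
  have := gibbs hM.1.eigenvalues (fun _ => 1 / Fintype.card n)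
    (fun i => hM.eigenvalues_nonneg i) (fun i => by positivity) hsum
    (by rw [Finset.sum_const, Finset.card_univ, nsmul_eq_mul]; field_simp)
    (fun i h => absurd h (by positivity))
  rw [Sr_herm hM.1]
  refine le_trans this ?_
  have h1 : ∀ i : n, hM.1.eigenvalues i * Real.log (1 / Fintype.card n)
      = -(hM.1.eigenvalues i * Real.log (Fintype.card n)) := by
    intro i
    rw [one_div, Real.log_inv]
    ring
  rw [Finset.sum_congr rfl fun i _ => h1 i, Finset.sum_neg_distrib, neg_neg,
    ← Finset.sum_mul, hsum, one_mul]

lemma vnEntropy_le_card {n : Type*} [Fintype n] [DecidableEq n] {M : Matrix n n ℂ}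
    (hM : M.PosSemidef) (ht : M.trace = 1) :
    vnEntropy M ≤ Real.logb 2 (Fintype.card n) := by
  rw [vnEntropy_eq_Sr, Real.logb]
  exact (div_le_div_iff_of_pos_right (Real.log_pos one_lt_two)).mpr (Sr_le_log_card hM ht)


section Reduce
variable {N : ℕ}

/-- Glue functions on two disjoint index sets. -/
def glueEquiv (t r : Finset (Fin N)) (hd : Disjoint t r) :
    (({x // x ∈ t} → Fin 2) × ({x // x ∈ r} → Fin 2)) ≃ ({x // x ∈ t ∪ r} → Fin 2) where
  toFun p := fun x => if hx : x.1 ∈ t then p.1 ⟨x.1, hx⟩ else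
    p.2 ⟨x.1, (Finset.mem_union.mp x.2).resolve_left hx⟩
  invFun f := (fun x => f ⟨x.1, Finset.mem_union_left r x.2⟩,
    fun x => f ⟨x.1, Finset.mem_union_right t x.2⟩)
  left_inv := by
    rintro ⟨a, b⟩
    refine Prod.ext ?_ ?_
    · funext x
      show (if hx : x.1 ∈ t then _ else _) = a x
      rw [dif_pos x.2]
    · funext x
      show (if hx : x.1 ∈ t then _ else _) = b x
      rw [dif_neg (Finset.disjoint_right.mp hd x.2)]
  right_inv := by
    intro f
    funext x
    show (if hx : x.1 ∈ t then _ else _) = f x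
    split_ifs <;> rfl

/-- Glue functions on `r` and `(t ∪ r)ᶜ` into a function on `tᶜ`. -/
def chiB (t r : Finset (Fin N)) (hd : Disjoint t r) :
    (({x // x ∈ r} → Fin 2) × ({x // x ∈ (t ∪ r)ᶜ} → Fin 2)) ≃ ({x // x ∈ tᶜ} → Fin 2) where
  toFun p := fun x => if hx : x.1 ∈ r then p.1 ⟨x.1, hx⟩ else
    p.2 ⟨x.1, Finset.mem_compl.mpr (fun hm => (Finset.mem_union.mp hm).elim
      (Finset.mem_compl.mp x.2) hx)⟩
  invFun f := (fun x => f ⟨x.1, Finset.mem_compl.mpr (Finset.disjoint_right.mp hd x.2)⟩,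
    fun x => f ⟨x.1, Finset.mem_compl.mpr
      (fun hm => Finset.mem_compl.mp x.2 (Finset.mem_union_left r hm))⟩)
  left_inv := by
    rintro ⟨b, h⟩
    refine Prod.ext ?_ ?_
    · funext x
      show (if hx : x.1 ∈ r then _ else _) = b x
      rw [dif_pos x.2]
    · funext x
      show (if hx : x.1 ∈ r then _ else _) = h x
      rw [dif_neg (fun hr => Finset.mem_compl.mp x.2 (Finset.mem_union_right t hr))]
  right_inv := by
    intro f
    funext x
    show (if hx : x.1 ∈ r then _ else _) = f x
    split_ifs <;> rfl

/-- Glue functions on `t` and `(t ∪ r)ᶜ` into a function on `rᶜ`. -/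
def chiA (t r : Finset (Fin N)) (hd : Disjoint t r) :
    (({x // x ∈ t} → Fin 2) × ({x // x ∈ (t ∪ r)ᶜ} → Fin 2)) ≃ ({x // x ∈ rᶜ} → Fin 2) where
  toFun p := fun x => if hx : x.1 ∈ t then p.1 ⟨x.1, hx⟩ else
    p.2 ⟨x.1, Finset.mem_compl.mpr (fun hm => (Finset.mem_union.mp hm).elim
      hx (Finset.mem_compl.mp x.2))⟩
  invFun f := (fun x => f ⟨x.1, Finset.mem_compl.mpr (Finset.disjoint_left.mp hd x.2)⟩,
    fun x => f ⟨x.1, Finset.mem_compl.mpr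
      (fun hm => Finset.mem_compl.mp x.2 (Finset.mem_union_right t hm))⟩)
  left_inv := by
    rintro ⟨a, h⟩
    refine Prod.ext ?_ ?_
    · funext x
      show (if hx : x.1 ∈ t then _ else _) = a x
      rw [dif_pos x.2]
    · funext x
      show (if hx : x.1 ∈ t then _ else _) = h x
      rw [dif_neg (fun ht => Finset.mem_compl.mp x.2 (Finset.mem_union_left r ht))]
  right_inv := by
    intro f
    funext x
    show (if hx : x.1 ∈ t then _ else _) = f x
    split_ifs <;> rfl

/-- Split a function on all of `Fin N` into its `s` and `sᶜ` parts. -/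
def psiEquiv (s : Finset (Fin N)) :
    (({x // x ∈ s} → Fin 2) × ({x // x ∈ sᶜ} → Fin 2)) ≃ (Fin N → Fin 2) where
  toFun p := fun j => if hj : j ∈ s then p.1 ⟨j, hj⟩ else p.2 ⟨j, Finset.mem_compl.mpr hj⟩
  invFun g := (fun x => g x.1, fun x => g x.1)
  left_inv := by
    rintro ⟨f, h⟩
    refine Prod.ext ?_ ?_
    · funext x
      show (if hj : x.1 ∈ s then _ else _) = f x
      rw [dif_pos x.2]
    · funext x
      show (if hj : x.1 ∈ s then _ else _) = h x
      rw [dif_neg (Finset.mem_compl.mp x.2)]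
  right_inv := by
    intro g
    funext j
    show (if hj : j ∈ s then _ else _) = g j
    split_ifs <;> rfl

lemma reduce_eq_ptraceB (ρ : Matrix (Fin N → Fin 2) (Fin N → Fin 2) ℂ) (s : Finset (Fin N)) :
    reduce ρ s = ptraceB (ρ.submatrix (psiEquiv s) (psiEquiv s)) := by
  ext f g
  show (∑ h : {x // x ∈ sᶜ} → Fin 2, ρ _ _) = ∑ h : {x // x ∈ sᶜ} → Fin 2, ρ _ _
  refine Finset.sum_congr rfl fun h _ => rfl

lemma reduce_density {ρ : Matrix (Fin N → Fin 2) (Fin N → Fin 2) ℂ} (hρ : IsDensityMatrix ρ)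
    (s : Finset (Fin N)) : (reduce ρ s).PosSemidef ∧ (reduce ρ s).trace = 1 := by
  rw [reduce_eq_ptraceB]
  exact ⟨ptraceB_posSemidef_s10 (submatrix_posSemidef hρ.1 (psiEquiv s)),
    by rw [ptraceB_trace, submatrix_trace, hρ.2]⟩

end Reduce


section ReduceSplit
variable {N : ℕ} (ρ : Matrix (Fin N → Fin 2) (Fin N → Fin 2) ℂ)

lemma sum_pair_equiv {α β γ M : Type*} [Fintype α] [Fintype β] [Fintype γ] [AddCommMonoid M]
    (e : α × β ≃ γ) (f : α → β → M) (g : γ → M) (h : ∀ a b, f a b = g (e (a, b))) :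
    ∑ a, ∑ b, f a b = ∑ c, g c := by
  calc ∑ a, ∑ b, f a b = ∑ p ∈ Finset.univ ×ˢ Finset.univ, f p.1 p.2 :=
        (Finset.sum_product' Finset.univ Finset.univ f).symm
    _ = ∑ p : α × β, f p.1 p.2 := by rw [Finset.univ_product_univ]
    _ = ∑ c, g c := Fintype.sum_equiv e _ _ (fun p => h p.1 p.2)

lemma argEqB (t r : Finset (Fin N)) (hd : Disjoint t r) (f : {x // x ∈ t} → Fin 2)
    (b : {x // x ∈ r} → Fin 2) (h : {x // x ∈ (t ∪ r)ᶜ} → Fin 2) :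
    (fun j => if hj : j ∈ t ∪ r then (glueEquiv t r hd (f, b)) ⟨j, hj⟩
      else h ⟨j, Finset.mem_compl.mpr hj⟩)
    = (fun j => if hj : j ∈ t then f ⟨j, hj⟩
      else (chiB t r hd (b, h)) ⟨j, Finset.mem_compl.mpr hj⟩) := by
  funext j
  by_cases hjt : j ∈ t
  · rw [dif_pos (Finset.mem_union_left r hjt), dif_pos hjt]
    show (if hx : j ∈ t then _ else _) = _
    rw [dif_pos hjt]
  · rw [dif_neg hjt]
    by_cases hjr : j ∈ r
    · rw [dif_pos (Finset.mem_union_right t hjr)]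
      show (if hx : j ∈ t then _ else _) = (if hx : j ∈ r then _ else _)
      rw [dif_neg hjt, dif_pos hjr]
    · have hju : j ∉ t ∪ r := fun hm => (Finset.mem_union.mp hm).elim hjt hjr
      rw [dif_neg hju]
      show _ = (if hx : j ∈ r then _ else _)
      rw [dif_neg hjr]

lemma argEqA (t r : Finset (Fin N)) (hd : Disjoint t r) (g : {x // x ∈ r} → Fin 2)
    (a : {x // x ∈ t} → Fin 2) (h : {x // x ∈ (t ∪ r)ᶜ} → Fin 2) :
    (fun j => if hj : j ∈ t ∪ r then (glueEquiv t r hd (a, g)) ⟨j, hj⟩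
      else h ⟨j, Finset.mem_compl.mpr hj⟩)
    = (fun j => if hj : j ∈ r then g ⟨j, hj⟩
      else (chiA t r hd (a, h)) ⟨j, Finset.mem_compl.mpr hj⟩) := by
  funext j
  by_cases hjt : j ∈ t
  · have hjr : j ∉ r := Finset.disjoint_left.mp hd hjt
    rw [dif_pos (Finset.mem_union_left r hjt), dif_neg hjr]
    show (if hx : j ∈ t then _ else _) = (if hx : j ∈ t then _ else _)
    rw [dif_pos hjt, dif_pos hjt]
  · by_cases hjr : j ∈ r
    · rw [dif_pos (Finset.mem_union_right t hjr), dif_pos hjr]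
      show (if hx : j ∈ t then _ else _) = _
      rw [dif_neg hjt]
    · have hju : j ∉ t ∪ r := fun hm => (Finset.mem_union.mp hm).elim hjt hjr
      rw [dif_neg hju, dif_neg hjr]
      show _ = (if hx : j ∈ t then _ else _)
      rw [dif_neg hjt]

lemma ptraceB_reduce (t r : Finset (Fin N)) (hd : Disjoint t r) :
    ptraceB ((reduce ρ (t ∪ r)).submatrix (glueEquiv t r hd) (glueEquiv t r hd))
      = reduce ρ t := by
  ext f g
  show ∑ b : {x // x ∈ r} → Fin 2,
      (reduce ρ (t ∪ r)) (glueEquiv t r hd (f, b)) (glueEquiv t r hd (g, b)) = _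
  have h1 : ∀ b : {x // x ∈ r} → Fin 2,
      (reduce ρ (t ∪ r)) (glueEquiv t r hd (f, b)) (glueEquiv t r hd (g, b))
      = ∑ h : {x // x ∈ (t ∪ r)ᶜ} → Fin 2,
        ρ (fun j => if hj : j ∈ t ∪ r then (glueEquiv t r hd (f, b)) ⟨j, hj⟩
            else h ⟨j, Finset.mem_compl.mpr hj⟩)
          (fun j => if hj : j ∈ t ∪ r then (glueEquiv t r hd (g, b)) ⟨j, hj⟩
            else h ⟨j, Finset.mem_compl.mpr hj⟩) := fun b => rfl
  rw [Finset.sum_congr rfl fun b _ => h1 b]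
  refine sum_pair_equiv (chiB t r hd) _ _ ?_
  intro b h
  rw [argEqB t r hd f b h, argEqB t r hd g b h]

lemma ptraceA_reduce (t r : Finset (Fin N)) (hd : Disjoint t r) :
    ptraceA ((reduce ρ (t ∪ r)).submatrix (glueEquiv t r hd) (glueEquiv t r hd))
      = reduce ρ r := by
  ext f g
  show ∑ a : {x // x ∈ t} → Fin 2,
      (reduce ρ (t ∪ r)) (glueEquiv t r hd (a, f)) (glueEquiv t r hd (a, g)) = _
  have h1 : ∀ a : {x // x ∈ t} → Fin 2,
      (reduce ρ (t ∪ r)) (glueEquiv t r hd (a, f)) (glueEquiv t r hd (a, g))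
      = ∑ h : {x // x ∈ (t ∪ r)ᶜ} → Fin 2,
        ρ (fun j => if hj : j ∈ t ∪ r then (glueEquiv t r hd (a, f)) ⟨j, hj⟩
            else h ⟨j, Finset.mem_compl.mpr hj⟩)
          (fun j => if hj : j ∈ t ∪ r then (glueEquiv t r hd (a, g)) ⟨j, hj⟩
            else h ⟨j, Finset.mem_compl.mpr hj⟩) := fun a => rfl
  rw [Finset.sum_congr rfl fun a _ => h1 a]
  refine sum_pair_equiv (chiA t r hd) _ _ ?_
  intro a h
  rw [argEqA t r hd f a h, argEqA t r hd g a h]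

lemma vn_subadd {A B : Type*} [Fintype A] [Fintype B] [DecidableEq A] [DecidableEq B]
    {τ : Matrix (A × B) (A × B) ℂ} (hτ : τ.PosSemidef) (ht : τ.trace = 1) :
    vnEntropy τ ≤ vnEntropy (ptraceB τ) + vnEntropy (ptraceA τ) := by
  rw [vnEntropy_eq_Sr, vnEntropy_eq_Sr, vnEntropy_eq_Sr, ← add_div]
  refine (div_le_div_iff_of_pos_right (Real.log_pos one_lt_two)).mpr ?_
  rw [Sr_herm hτ.1, Sr_herm (ptraceB_posSemidef_s10 hτ).1, Sr_herm (ptraceA_posSemidef hτ).1]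
  exact subadd hτ ht

lemma reduce_subadd {ρ : Matrix (Fin N → Fin 2) (Fin N → Fin 2) ℂ}
    (hρ : IsDensityMatrix ρ) (t r : Finset (Fin N)) (hd : Disjoint t r) :
    vnEntropy (reduce ρ (t ∪ r)) ≤ vnEntropy (reduce ρ t) + vnEntropy (reduce ρ r) := by
  have hden := reduce_density hρ (t ∪ r)
  set M' := (reduce ρ (t ∪ r)).submatrix (glueEquiv t r hd) (glueEquiv t r hd) with hM'
  have hM'psd : M'.PosSemidef := submatrix_posSemidef hden.1 (glueEquiv t r hd)
  have hM'tr : M'.trace = 1 := by rw [hM', submatrix_trace, hden.2]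
  have h1 : vnEntropy (reduce ρ (t ∪ r)) = vnEntropy M' :=
    (vnEntropy_submatrix hden.1.1 (glueEquiv t r hd)).symm
  rw [h1]
  have h2 := vn_subadd hM'psd hM'tr
  rwa [hM', ptraceB_reduce ρ t r hd, ptraceA_reduce ρ t r hd] at h2

lemma reduce_dim_bound {ρ : Matrix (Fin N → Fin 2) (Fin N → Fin 2) ℂ}
    (hρ : IsDensityMatrix ρ) (u : Finset (Fin N)) :
    vnEntropy (reduce ρ u) ≤ (u.card : ℝ) := by
  have hden := reduce_density hρ u
  refine le_trans (vnEntropy_le_card hden.1 hden.2) ?_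
  have hcard : (Fintype.card ({x // x ∈ u} → Fin 2) : ℝ) = (2 : ℝ) ^ u.card := by
    rw [Fintype.card_fun, Fintype.card_coe]
    push_cast
    norm_num
  rw [hcard]
  rw [show ((2:ℝ) ^ u.card) = ((2:ℝ) ^ (u.card : ℕ)) from rfl]
  rw [Real.logb, Real.log_pow, mul_div_assoc, div_self (ne_of_gt (Real.log_pos one_lt_two)),
    mul_one]

end ReduceSplit

-- MORE HERE





lemma comb_bound (N k : ℕ) (h2k : 2 * k ≤ N) (E : Finset (Fin N) → ℝ)
    (hsub : ∀ t r : Finset (Fin N), Disjoint t r → E (t ∪ r) ≤ E t + E r)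
    (hdim : ∀ u : Finset (Fin N), E u ≤ (u.card : ℝ)) :
    ∑ s ∈ Finset.powersetCard (N - k) (Finset.univ : Finset (Fin N)), (E s - E sᶜ) ≤
      (N.choose k : ℝ) * ((N : ℝ) - 2 * k) := by
  have hkN : k ≤ N := by omega
  have hkNk : k ≤ N - k := by omega
  set S := Finset.powersetCard (N - k) (Finset.univ : Finset (Fin N)) with hS
  set T := Finset.powersetCard k (Finset.univ : Finset (Fin N)) with hT
  set c := (N - k).choose k with hc
  have hcpos : 0 < c := Nat.choose_pos hkNk
  -- per-s subadditivity bound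
  have h1 : ∀ s ∈ S, (c : ℝ) * E s ≤ ∑ t ∈ Finset.powersetCard k s, (E t + E (s \ t)) := by
    intro s hs
    have hcard : s.card = N - k := (Finset.mem_powersetCard.mp hs).2
    have hcount : (Finset.powersetCard k s).card = c := by
      rw [Finset.card_powersetCard, hcard]
    have heq : (c : ℝ) * E s = ∑ _t ∈ Finset.powersetCard k s, E s := by
      rw [Finset.sum_const, hcount, nsmul_eq_mul]
    rw [heq]
    refine Finset.sum_le_sum fun t htm => ?_
    have hts : t ⊆ s := (Finset.mem_powersetCard.mp htm).1
    have h := hsub t (s \ t) Finset.disjoint_sdiff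
    rwa [Finset.union_sdiff_of_subset hts] at h
  -- counting supersets
  have hcount2 : ∀ t ∈ T, (S.filter fun s => t ⊆ s).card = c := by
    intro t htm
    have htc : t.card = k := (Finset.mem_powersetCard.mp htm).2
    have hbij : (S.filter fun s => t ⊆ s).card = (tᶜ.powersetCard (N - 2 * k)).card := by
      refine Finset.card_bij' (fun s _ => s \ t) (fun u _ => t ∪ u) ?_ ?_ ?_ ?_
      · intro s hsm
        obtain ⟨hsS, hts⟩ := Finset.mem_filter.mp hsm
        have hcard : s.card = N - k := (Finset.mem_powersetCard.mp hsS).2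
        refine Finset.mem_powersetCard.mpr ⟨?_, ?_⟩
        · intro x hx
          exact Finset.mem_compl.mpr (Finset.mem_sdiff.mp hx).2
        · rw [Finset.card_sdiff_of_subset hts, hcard, htc]
          omega
      · intro u hum
        obtain ⟨huc, hucard⟩ := Finset.mem_powersetCard.mp hum
        have hdis : Disjoint t u := Finset.disjoint_left.mpr
          (fun a hat hau => Finset.mem_compl.mp (huc hau) hat)
        refine Finset.mem_filter.mpr ⟨Finset.mem_powersetCard.mpr ⟨Finset.subset_univ _, ?_⟩,
          Finset.subset_union_left⟩
        rw [Finset.card_union_of_disjoint hdis, htc, hucard]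
        omega
      · intro s hsm
        exact Finset.union_sdiff_of_subset (Finset.mem_filter.mp hsm).2
      · intro u hum
        exact Finset.union_sdiff_cancel_left (Finset.disjoint_left.mpr
          (fun a hat hau => Finset.mem_compl.mp ((Finset.mem_powersetCard.mp hum).1 hau) hat))
    rw [hbij, Finset.card_powersetCard, Finset.card_compl, Fintype.card_fin, htc,
      show N - 2 * k = (N - k) - k by omega]
    exact Nat.choose_symm hkNk
  -- double counting of the middle terms
  have h3 : ∑ s ∈ S, ∑ t ∈ Finset.powersetCard k s, E t = (c : ℝ) * ∑ t ∈ T, E t := by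
    have hswap : ∀ s ∈ S, ∑ t ∈ Finset.powersetCard k s, E t
        = ∑ t ∈ T, if t ⊆ s then E t else 0 := by
      intro s _
      rw [← Finset.sum_filter]
      refine (Finset.sum_congr ?_ fun _ _ => rfl)
      ext t
      simp only [Finset.mem_powersetCard, Finset.mem_filter, hT]
      constructor
      · rintro ⟨h1', h2'⟩; exact ⟨⟨Finset.subset_univ _, h2'⟩, h1'⟩
      · rintro ⟨⟨_, h2'⟩, h1'⟩; exact ⟨h1', h2'⟩
    rw [Finset.sum_congr rfl hswap, Finset.sum_comm, Finset.mul_sum]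
    refine Finset.sum_congr rfl fun t htm => ?_
    rw [← Finset.sum_filter, Finset.sum_const, nsmul_eq_mul, hcount2 t htm]
  -- complement reindexing
  have h4 : ∑ s ∈ S, E sᶜ = ∑ u ∈ T, E u := by
    refine Finset.sum_nbij' (fun s => sᶜ) (fun u => uᶜ) ?_ ?_ ?_ ?_ ?_
    · intro s hs
      have hcard : s.card = N - k := (Finset.mem_powersetCard.mp hs).2
      refine Finset.mem_powersetCard.mpr ⟨Finset.subset_univ _, ?_⟩
      rw [Finset.card_compl, Fintype.card_fin, hcard]
      omega
    · intro u hu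
      have hcard : u.card = k := (Finset.mem_powersetCard.mp hu).2
      refine Finset.mem_powersetCard.mpr ⟨Finset.subset_univ _, ?_⟩
      rw [Finset.card_compl, Fintype.card_fin, hcard]
    · intro s _; exact compl_compl s
    · intro u _; exact compl_compl u
    · intro s _; rfl
  have hScard : S.card = N.choose k := by
    rw [hS, Finset.card_powersetCard, Finset.card_univ, Fintype.card_fin]
    exact Nat.choose_symm hkN
  have h6 : ∑ s ∈ S, ∑ t ∈ Finset.powersetCard k s, E (s \ t)
      ≤ (N.choose k : ℝ) * c * ((N : ℝ) - 2 * k) := by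
    have hper : ∀ s ∈ S, ∑ t ∈ Finset.powersetCard k s, E (s \ t)
        ≤ (c : ℝ) * ((N : ℝ) - 2 * k) := by
      intro s hs
      have hcard : s.card = N - k := (Finset.mem_powersetCard.mp hs).2
      have hcount : (Finset.powersetCard k s).card = c := by
        rw [Finset.card_powersetCard, hcard]
      calc ∑ t ∈ Finset.powersetCard k s, E (s \ t)
          ≤ ∑ _t ∈ Finset.powersetCard k s, ((N : ℝ) - 2 * k) := by
            refine Finset.sum_le_sum fun t htm => ?_
            have hts : t ⊆ s := (Finset.mem_powersetCard.mp htm).1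
            have htc : t.card = k := (Finset.mem_powersetCard.mp htm).2
            have hcd : (s \ t).card = N - 2 * k := by
              rw [Finset.card_sdiff_of_subset hts, hcard, htc]; omega
            refine le_trans (hdim (s \ t)) ?_
            rw [hcd, Nat.cast_sub h2k]
            push_cast
            exact le_refl _
        _ = (c : ℝ) * ((N : ℝ) - 2 * k) := by
            rw [Finset.sum_const, hcount, nsmul_eq_mul]
    calc ∑ s ∈ S, ∑ t ∈ Finset.powersetCard k s, E (s \ t)
        ≤ ∑ _s ∈ S, (c : ℝ) * ((N : ℝ) - 2 * k) := Finset.sum_le_sum hper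
      _ = (S.card : ℝ) * ((c : ℝ) * ((N : ℝ) - 2 * k)) := by
          rw [Finset.sum_const, nsmul_eq_mul]
      _ = (N.choose k : ℝ) * c * ((N : ℝ) - 2 * k) := by rw [hScard]; ring
  have key : (c : ℝ) * (∑ s ∈ S, (E s - E sᶜ))
      ≤ (c : ℝ) * ((N.choose k : ℝ) * ((N : ℝ) - 2 * k)) := by
    rw [Finset.mul_sum]
    calc ∑ s ∈ S, (c : ℝ) * (E s - E sᶜ)
        = ∑ s ∈ S, ((c : ℝ) * E s) - ∑ s ∈ S, (c : ℝ) * E sᶜ := by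
          rw [← Finset.sum_sub_distrib]
          exact Finset.sum_congr rfl fun s _ => by ring
      _ ≤ ∑ s ∈ S, (∑ t ∈ Finset.powersetCard k s, (E t + E (s \ t)))
            - ∑ s ∈ S, (c : ℝ) * E sᶜ := sub_le_sub_right (Finset.sum_le_sum h1) _
      _ = (∑ s ∈ S, ∑ t ∈ Finset.powersetCard k s, E t)
            + (∑ s ∈ S, ∑ t ∈ Finset.powersetCard k s, E (s \ t))
            - (c : ℝ) * ∑ s ∈ S, E sᶜ := by
          rw [← Finset.mul_sum, ← Finset.sum_add_distrib]
          congr 1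
          exact Finset.sum_congr rfl fun s _ => Finset.sum_add_distrib
      _ = (c : ℝ) * (∑ t ∈ T, E t) + (∑ s ∈ S, ∑ t ∈ Finset.powersetCard k s, E (s \ t))
            - (c : ℝ) * ∑ u ∈ T, E u := by rw [h3, h4]
      _ = ∑ s ∈ S, ∑ t ∈ Finset.powersetCard k s, E (s \ t) := by ring
      _ ≤ (N.choose k : ℝ) * c * ((N : ℝ) - 2 * k) := h6
      _ = (c : ℝ) * ((N.choose k : ℝ) * ((N : ℝ) - 2 * k)) := by ring
  have hcr : (0 : ℝ) < (c : ℝ) := by exact_mod_cast hcpos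
  exact le_of_mul_le_mul_left key hcr

/-- **Subadditivity bound on the inner sum.** For every `k ≤ ⌊N/2⌋`,
`∑_{|i| = N-k} (S(ρ_i) - S(ρ_ī)) ≤ C(N,k) (N - 2k)`. -/
theorem inner_sum_entropy_diff_le
    (N : ℕ) (ρ : Matrix (Fin N → Fin 2) (Fin N → Fin 2) ℂ) (hρ : IsDensityMatrix ρ)
    (k : ℕ) (hk : k ≤ N / 2) :
    ∑ s ∈ Finset.powersetCard (N - k) (Finset.univ : Finset (Fin N)),
        (vnEntropy (reduce ρ s) - vnEntropy (reduce ρ sᶜ)) ≤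
      (N.choose k : ℝ) * ((N : ℝ) - 2 * k) := by
  exact comb_bound N k (by omega) (fun u => vnEntropy (reduce ρ u))
    (fun t r hd => reduce_subadd hρ t r hd) (fun u => reduce_dim_bound hρ u)

end QI
end
end
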